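/- arXiv:1506.07022 — 4 statements merged into one kernel-verified Lean document; each statement's English description precedes it below -/
import Mathlib

section
/- For partitions λ and μ of n, if λ dominates μ in the dominance order, then there exists at least one semistandard Young tableau of shape λ and weight μ; that is, the Kostka number K_{λμ} is positive. -/
/-- A partition encoded as a weakly decreasing, finitely supported function `ℕ → ℕ`
(0-indexed: `l 0` is the first part). -/
def IsPartition (l : ℕ → ℕ) : Prop :=
  Antitone l ∧ ∃ N, ∀ i, N ≤ i → l i = 0

/-- The size (sum of the parts). -/
noncomputable def psize (l : ℕ → ℕ) : ℕ := ∑ᶠ i, l i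

/-- Dominance order: every partial sum of `l` is at least that of `m`. -/
def Dominates (l m : ℕ → ℕ) : Prop :=
  ∀ k, ∑ i ∈ Finset.range k, m i ≤ ∑ i ∈ Finset.range k, l i

/-- `l` has exactly `h` (nonzero) parts. -/
def PartLength (l : ℕ → ℕ) (h : ℕ) : Prop :=
  (∀ i, i < h → 0 < l i) ∧ ∀ i, h ≤ i → l i = 0

/-- A semistandard Young tableau of shape `l`: positive entries in the cells
`(i, j)` with `j < l i`, zero outside, rows weakly increasing, columns strictly
increasing. -/
def IsSSYT (l : ℕ → ℕ) (T : ℕ → ℕ → ℕ) : Prop :=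
  (∀ i j, j < l i → 1 ≤ T i j) ∧
  (∀ i j, l i ≤ j → T i j = 0) ∧
  (∀ i j k, j ≤ k → k < l i → T i j ≤ T i k) ∧
  (∀ i i' j, i < i' → j < l i' → T i j < T i' j)

/-- The number of cells of `T` (inside shape `l`) with entry `m + 1`. -/
noncomputable def entryCount (l : ℕ → ℕ) (T : ℕ → ℕ → ℕ) (m : ℕ) : ℕ :=
  Set.ncard {p : ℕ × ℕ | p.2 < l p.1 ∧ T p.1 p.2 = m + 1}

/-- `T` has weight `w`: the entry `m + 1` occurs `w m` times. -/
def HasWeight (l : ℕ → ℕ) (T : ℕ → ℕ → ℕ) (w : ℕ → ℕ) : Prop :=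
  ∀ m, entryCount l T m = w m

/-- The Kostka number: the number of semistandard Young tableaux of shape `l`
and weight `w`. -/
noncomputable def kostka (l w : ℕ → ℕ) : ℕ :=
  Set.ncard {T : ℕ → ℕ → ℕ | IsSSYT l T ∧ HasWeight l T w}

lemma psize_eq_sum (l : ℕ → ℕ) {N : ℕ} (h : ∀ i, N ≤ i → l i = 0) :
    psize l = ∑ i ∈ Finset.range N, l i := by
  apply finsum_eq_sum_of_support_subset
  intro i hi
  simp only [Function.mem_support] at hi
  simp only [Finset.coe_range, Set.mem_Iio]
  by_contra h'
  exact hi (h i (le_of_not_gt h'))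

lemma sum_range_le_psize (l : ℕ → ℕ) {N : ℕ} (h : ∀ i, N ≤ i → l i = 0) (t : ℕ) :
    ∑ i ∈ Finset.range t, l i ≤ psize l := by
  rw [psize_eq_sum l (N := max t N) (fun i hi => h i (le_trans (le_max_right _ _) hi))]
  exact Finset.sum_le_sum_of_subset (Finset.range_subset_range.2 (le_max_left _ _))

lemma sum_sub_telescope {g : ℕ → ℕ} (hg : ∀ i, g (i+1) ≤ g i) (N : ℕ) :
    ∑ i ∈ Finset.range N, (g i - g (i+1)) = g 0 - g N := by
  induction N with
  | zero => simp
  | succ n ih =>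
    have h1 : g n ≤ g 0 := (antitone_nat_of_succ_le hg) (Nat.zero_le n)
    rw [Finset.sum_range_succ, ih]
    have := hg n; omega

lemma entrySet_finite {l : ℕ → ℕ} (hmono : Antitone l) {R : ℕ} (hR : ∀ i, R ≤ i → l i = 0)
    (T : ℕ → ℕ → ℕ) (m : ℕ) :
    {p : ℕ × ℕ | p.2 < l p.1 ∧ T p.1 p.2 = m + 1}.Finite := by
  apply Set.Finite.subset (Finset.finite_toSet (Finset.range R ×ˢ Finset.range (l 0)))
  rintro ⟨i, j⟩ ⟨h1, _⟩
  simp only [Finset.coe_product, Set.mem_prod, Finset.mem_coe, Finset.mem_range]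
  constructor
  · by_contra h'
    rw [hR i (le_of_not_gt h')] at h1; omega
  · exact lt_of_lt_of_le h1 (hmono (Nat.zero_le i))

lemma entry_ne {l : ℕ → ℕ} (hmono : Antitone l) {R : ℕ} (hR : ∀ i, R ≤ i → l i = 0)
    {T : ℕ → ℕ → ℕ} {w : ℕ → ℕ} (hw : HasWeight l T w) {m : ℕ} (hwm : w m = 0)
    {i j : ℕ} (hij : j < l i) : T i j ≠ m + 1 := by
  intro h
  have hpos : 0 < entryCount l T m := by
    rw [entryCount, Set.ncard_pos (entrySet_finite hmono hR T m)]
    exact ⟨(i, j), hij, h⟩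
  rw [hw m, hwm] at hpos; omega

lemma kostka_pos_of_exists {lam mu : ℕ → ℕ} (hlp : IsPartition lam) (hmp : IsPartition mu)
    (hex : {T : ℕ → ℕ → ℕ | IsSSYT lam T ∧ HasWeight lam T mu}.Nonempty) :
    0 < kostka lam mu := by
  obtain ⟨R, hR⟩ := hlp.2
  obtain ⟨B, hB⟩ := hmp.2
  set S := {T : ℕ → ℕ → ℕ | IsSSYT lam T ∧ HasWeight lam T mu} with hSdef
  have hbound : ∀ T ∈ S, ∀ i j, T i j ≤ B := by
    intro T hT i j
    rcases lt_or_ge j (lam i) with h | h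
    · by_contra hgt
      push_neg at hgt
      have h1 : T i j = (T i j - 1) + 1 := by
        have := hT.1.1 i j h; omega
      exact entry_ne hlp.1 hR hT.2 (hB _ (by omega)) h h1
    · simp [hT.1.2.1 i j h]
  have hfin : S.Finite := by
    rw [← Set.finite_coe_iff]
    apply Finite.of_injective
      (fun T : S => (fun p : Fin R × Fin (lam 0) =>
        (⟨T.1 p.1 p.2, Nat.lt_succ_of_le (hbound T.1 T.2 p.1 p.2)⟩ : Fin (B+1))))
    intro T T' h
    apply Subtype.ext
    funext i j
    rcases lt_or_ge i R with hi | hi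
    · rcases lt_or_ge j (lam 0) with hj | hj
      · have := congrFun h (⟨i, hi⟩, ⟨j, hj⟩)
        exact congrArg Fin.val this
      · rw [T.2.1.2.1 i j (le_trans (hlp.1 (Nat.zero_le i)) hj),
          T'.2.1.2.1 i j (le_trans (hlp.1 (Nat.zero_le i)) hj)]
    · rw [T.2.1.2.1 i j (by rw [hR i hi]; omega),
        T'.2.1.2.1 i j (by rw [hR i hi]; omega)]
  rw [kostka, Set.ncard_pos hfin]
  exact hex

lemma strip_ncard (lam lam' : ℕ → ℕ) (K : ℕ) (h0 : ∀ i, K ≤ i → lam i = 0) :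
    {p : ℕ × ℕ | lam' p.1 ≤ p.2 ∧ p.2 < lam p.1}.ncard
      = ∑ i ∈ Finset.range K, (lam i - lam' i) := by
  classical
  have hset : {p : ℕ × ℕ | lam' p.1 ≤ p.2 ∧ p.2 < lam p.1}
      = ↑((Finset.range K).biUnion
          (fun i => ({i} : Finset ℕ) ×ˢ Finset.Ico (lam' i) (lam i))) := by
    ext ⟨i, j⟩
    simp only [Set.mem_setOf_eq, Finset.coe_biUnion, Finset.mem_coe, Finset.mem_biUnion,
      Finset.mem_range, Finset.mem_product, Finset.mem_singleton, Finset.mem_Ico, Set.mem_iUnion]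
    constructor
    · rintro ⟨h1, h2⟩
      refine ⟨i, ?_, rfl, h1, h2⟩
      by_contra h'
      rw [h0 i (le_of_not_gt h')] at h2; omega
    · rintro ⟨i', _, rfl, h1, h2⟩
      exact ⟨h1, h2⟩
  rw [hset, Set.ncard_coe_finset, Finset.card_biUnion]
  · apply Finset.sum_congr rfl
    intro i _
    rw [Finset.card_product]
    simp [Nat.card_Ico]
  · intro a _ b _ hab
    simp only [Finset.disjoint_left]
    rintro ⟨x, y⟩ hx hy
    simp only [Finset.mem_product, Finset.mem_singleton] at hx hy
    exact hab (hx.1 ▸ hy.1)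

lemma exists_ssyt (n : ℕ) : ∀ lam mu : ℕ → ℕ, IsPartition lam → psize lam = n →
    IsPartition mu → psize mu = n → Dominates lam mu →
    ∃ T, IsSSYT lam T ∧ HasWeight lam T mu := by
  induction n using Nat.strong_induction_on with
  | _ n IH =>
  intro lam mu hlp hln hmp hmn hd
  obtain ⟨Nl, hNl⟩ := hlp.2
  obtain ⟨Nm, hNm⟩ := hmp.2
  rcases Nat.eq_zero_or_pos n with h0 | hpos
  · subst h0
    have hlam0 : ∀ i, lam i = 0 := by
      intro i
      have h1 := sum_range_le_psize lam hNl (i+1)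
      rw [hln] at h1
      have h2 : lam i ≤ ∑ t ∈ Finset.range (i+1), lam t :=
        Finset.single_le_sum (fun t _ => Nat.zero_le _) (Finset.self_mem_range_succ i)
      omega
    have hmu0 : ∀ i, mu i = 0 := by
      intro i
      have h1 := sum_range_le_psize mu hNm (i+1)
      rw [hmn] at h1
      have h2 : mu i ≤ ∑ t ∈ Finset.range (i+1), mu t :=
        Finset.single_le_sum (fun t _ => Nat.zero_le _) (Finset.self_mem_range_succ i)
      omega
    refine ⟨fun _ _ => 0, ⟨?_, ?_, ?_, ?_⟩, ?_⟩
    · intro i j hj; rw [hlam0 i] at hj; omega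
    · intro i j _; rfl
    · intro i j k _ hk; exact absurd hk (by rw [hlam0 i]; omega)
    · intro i i' j _ hj; rw [hlam0 i'] at hj; omega
    · intro m
      rw [hmu0 m, entryCount]
      have hemp : {p : ℕ × ℕ | p.2 < lam p.1 ∧ (fun _ _ => (0:ℕ)) p.1 p.2 = m + 1} = ∅ :=
        Set.eq_empty_iff_forall_notMem.2 (by rintro ⟨i, j⟩ ⟨h1, h2⟩; rw [hlam0 i] at h1; omega)
      rw [hemp]
      exact Set.ncard_empty _
  · -- inductive step
    set K := sInf {N | ∀ i, N ≤ i → mu i = 0} with hKdef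
    have hK : ∀ i, K ≤ i → mu i = 0 := by
      have hne : {N | ∀ i, N ≤ i → mu i = 0}.Nonempty := ⟨Nm, fun i hi => hNm i hi⟩
      exact Nat.sInf_mem hne
    have hKpos : 0 < K := by
      by_contra h
      push_neg at h
      have h0' : ∀ i, mu i = 0 := fun i => hK i (by omega)
      rw [psize_eq_sum mu (N := 0) (fun i _ => h0' i)] at hmn
      simp at hmn; omega
    set c := mu (K - 1) with hc
    have hcpos : 0 < c := by
      by_contra h
      push_neg at h
      have hmem : (K - 1) ∈ {N | ∀ i, N ≤ i → mu i = 0} := by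
        intro i hi
        have := hmp.1 hi
        omega
      have := Nat.sInf_le hmem
      omega
    have hsum_mu_K : ∑ i ∈ Finset.range K, mu i = n := by
      rw [← psize_eq_sum mu hK, hmn]
    have hsum_lam_K : ∑ i ∈ Finset.range K, lam i = n := by
      have h1 := hd K
      have h2 := sum_range_le_psize lam hNl K
      omega
    have hlamK : ∀ i, K ≤ i → lam i = 0 := by
      intro i hi
      have h1 := sum_range_le_psize lam hNl (i+1)
      have h2 : ∑ t ∈ Finset.range K, lam t + lam i ≤ ∑ t ∈ Finset.range (i+1), lam t := by
        rw [add_comm, ← Finset.sum_insert (by simp; omega : i ∉ Finset.range K)]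
        apply Finset.sum_le_sum_of_subset
        intro x hx
        simp only [Finset.mem_insert, Finset.mem_range] at hx ⊢
        omega
      omega
    have hclam0 : c ≤ lam 0 := by
      have h1 := hd 1
      simp only [Finset.sum_range_one] at h1
      have h2 : c ≤ mu 0 := hmp.1 (Nat.zero_le (K - 1))
      omega
    have hcn : c ≤ n := by
      have h1 : c ≤ ∑ i ∈ Finset.range K, mu i :=
        Finset.single_le_sum (fun t _ => Nat.zero_le _)
          (by simp only [Finset.mem_range]; omega)
      omega
    set lam' : ℕ → ℕ := fun i => (lam i - c) + min c (lam (i + 1)) with hlam'def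
    set mu' : ℕ → ℕ := fun i => if i < K - 1 then mu i else 0 with hmu'def
    have hlamsucc : ∀ i, lam (i + 1) ≤ lam i := fun i => hlp.1 (by omega)
    have hlam'le : ∀ i, lam' i ≤ lam i := by
      intro i
      have := hlamsucc i
      simp only [hlam'def]; omega
    have hdiff : ∀ i, lam i - lam' i = min c (lam i) - min c (lam (i + 1)) := by
      intro i; have := hlamsucc i; simp only [hlam'def]; omega
    have hlam'anti : Antitone lam' := by
      apply antitone_nat_of_succ_le
      intro i
      have h1 := hlamsucc i
      have h2 := hlamsucc (i + 1)
      simp only [hlam'def]; omega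
    have hstrip : ∀ i, lam (i + 1) ≤ lam' i := by
      intro i; have := hlamsucc i; simp only [hlam'def]; omega
    have hlam'K : ∀ i, K ≤ i → lam' i = 0 := by
      intro i hi
      simp only [hlam'def, hlamK i hi, hlamK (i + 1) (by omega)]
      omega
    have hlam'p : IsPartition lam' := ⟨hlam'anti, K, hlam'K⟩
    have hminmono : ∀ i, min c (lam (i + 1)) ≤ min c (lam i) := by
      intro i; have := hlamsucc i; omega
    have hsum_diff : ∀ t, ∑ i ∈ Finset.range t, (lam i - lam' i) = c - min c (lam t) := by
      intro t
      rw [Finset.sum_congr rfl (fun i _ => hdiff i),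
        sum_sub_telescope (g := fun i => min c (lam i)) hminmono]
      omega
    have hsum_lam' : ∀ t, ∑ i ∈ Finset.range t, lam' i + (c - min c (lam t))
        = ∑ i ∈ Finset.range t, lam i := by
      intro t
      rw [← hsum_diff t, ← Finset.sum_add_distrib]
      exact Finset.sum_congr rfl (fun i _ => by have := hlam'le i; omega)
    have hsum_lam'_K : ∑ i ∈ Finset.range K, lam' i = n - c := by
      have h1 := hsum_lam' K
      rw [hsum_lam_K, hlamK K le_rfl] at h1
      omega
    have hpsize_lam' : psize lam' = n - c := by
      rw [psize_eq_sum lam' hlam'K, hsum_lam'_K]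
    have hmu'K : ∀ i, K - 1 ≤ i → mu' i = 0 := by
      intro i hi
      simp only [hmu'def]
      rw [if_neg (by omega)]
    have hmu'anti : Antitone mu' := by
      apply antitone_nat_of_succ_le
      intro i
      simp only [hmu'def]
      rcases lt_or_ge (i + 1) (K - 1) with h1 | h1
      · rw [if_pos h1, if_pos (by omega)]
        exact hmp.1 (Nat.le_succ i)
      · rw [if_neg (by omega)]
        exact Nat.zero_le _
    have hmu'p : IsPartition mu' := ⟨hmu'anti, K - 1, hmu'K⟩
    have hsum_mu_K1 : ∑ i ∈ Finset.range (K - 1), mu i = n - c := by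
      have hKeq : K = (K - 1) + 1 := by omega
      rw [hKeq, Finset.sum_range_succ] at hsum_mu_K
      omega
    have hpsize_mu' : psize mu' = n - c := by
      rw [psize_eq_sum mu' hmu'K, ← hsum_mu_K1]
      apply Finset.sum_congr rfl
      intro i hi
      simp only [Finset.mem_range] at hi
      simp only [hmu'def]
      rw [if_pos hi]
    have hd' : Dominates lam' mu' := by
      intro t
      rcases lt_or_ge t K with ht | ht
      · have hmu't : ∑ i ∈ Finset.range t, mu' i = ∑ i ∈ Finset.range t, mu i := by
          apply Finset.sum_congr rfl
          intro i hi
          simp only [Finset.mem_range] at hi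
          simp only [hmu'def]
          rw [if_pos (by omega)]
        rw [hmu't]
        have h1 := hsum_lam' t
        rcases le_or_gt c (lam t) with hct | hct
        · have := hd t
          omega
        · have h2 := hd (t + 1)
          rw [Finset.sum_range_succ, Finset.sum_range_succ] at h2
          have h3 : c ≤ mu t := hmp.1 (by omega : t ≤ K - 1)
          omega
      · have hmu't : ∑ i ∈ Finset.range t, mu' i = n - c := by
          rw [← hsum_mu_K1, ← Finset.sum_subset (Finset.range_subset_range.2 (by omega : K - 1 ≤ t))
            (fun i _ hi => hmu'K i (by simp only [Finset.mem_range] at hi; omega))]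
          apply Finset.sum_congr rfl
          intro i hi
          simp only [Finset.mem_range] at hi
          simp only [hmu'def]
          rw [if_pos hi]
        have hlam't : ∑ i ∈ Finset.range t, lam' i = n - c := by
          rw [← hsum_lam'_K]
          exact (Finset.sum_subset (Finset.range_subset_range.2 ht)
            (fun i _ hi => hlam'K i (by simp only [Finset.mem_range] at hi; omega))).symm
        omega
    obtain ⟨T', hT'ssyt, hT'w⟩ :=
      IH (n - c) (by omega) lam' mu' hlam'p hpsize_lam' hmu'p hpsize_mu' hd'
    have hT'bound : ∀ i j, j < lam' i → T' i j < K := by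
      intro i j hj
      by_contra h
      push_neg at h
      have h1 : T' i j = (T' i j - 1) + 1 := by have := hT'ssyt.1 i j hj; omega
      exact entry_ne hlam'anti hlam'K hT'w (hmu'K (T' i j - 1) (by omega)) hj h1
    set T : ℕ → ℕ → ℕ :=
      fun i j => if j < lam' i then T' i j else if j < lam i then K else 0 with hTdef
    refine ⟨T, ⟨?_, ?_, ?_, ?_⟩, ?_⟩
    · intro i j hj
      simp only [hTdef]
      rcases lt_or_ge j (lam' i) with h1 | h1
      · rw [if_pos h1]
        exact hT'ssyt.1 i j h1
      · rw [if_neg (by omega), if_pos hj]; omega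
    · intro i j hj
      simp only [hTdef]
      rw [if_neg (by have := hlam'le i; omega), if_neg (by omega)]
    · intro i j j' hjj' hj'
      simp only [hTdef]
      rcases lt_or_ge j' (lam' i) with h1 | h1
      · have h2 : j < lam' i := by omega
        rw [if_pos h2, if_pos h1]
        exact hT'ssyt.2.2.1 i j j' hjj' h1
      · rcases lt_or_ge j (lam' i) with h2 | h2
        · rw [if_pos h2, if_neg (show ¬ j' < lam' i by omega), if_pos hj']
          exact le_of_lt (hT'bound i j h2)
        · rw [if_neg (show ¬ j < lam' i by omega), if_pos (show j < lam i by omega),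
            if_neg (show ¬ j' < lam' i by omega), if_pos hj']
    · intro i i' j hii' hj
      have hji : j < lam i := lt_of_lt_of_le hj (hlp.1 (le_of_lt hii'))
      simp only [hTdef]
      rcases lt_or_ge j (lam' i') with h1 | h1
      · have h2 : j < lam' i := lt_of_lt_of_le h1 (hlam'anti (le_of_lt hii'))
        rw [if_pos h2, if_pos h1]
        exact hT'ssyt.2.2.2 i i' j hii' h1
      · have h3 : j < lam' i := by
          have h4 : lam i' ≤ lam (i + 1) := hlp.1 (by omega)
          have := hstrip i
          omega
        rw [if_pos h3, if_neg (by omega), if_pos hj]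
        exact hT'bound i j h3
    · intro m
      rcases eq_or_ne m (K - 1) with hm | hm
      · subst hm
        have hKm : K - 1 + 1 = K := by omega
        rw [entryCount]
        have hset : {p : ℕ × ℕ | p.2 < lam p.1 ∧ T p.1 p.2 = K - 1 + 1}
            = {p : ℕ × ℕ | lam' p.1 ≤ p.2 ∧ p.2 < lam p.1} := by
          ext ⟨i, j⟩
          simp only [Set.mem_setOf_eq, hTdef, hKm]
          constructor
          · rintro ⟨h1, h2⟩
            refine ⟨?_, h1⟩
            by_contra h3
            push_neg at h3
            rw [if_pos h3] at h2
            exact absurd h2 (Nat.ne_of_lt (hT'bound i j h3))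
          · rintro ⟨h1, h2⟩
            refine ⟨h2, ?_⟩
            rw [if_neg (by omega), if_pos h2]
        rw [hset, strip_ncard lam lam' K hlamK, hsum_diff K, hlamK K le_rfl]
        omega
      · have hset : {p : ℕ × ℕ | p.2 < lam p.1 ∧ T p.1 p.2 = m + 1}
            = {p : ℕ × ℕ | p.2 < lam' p.1 ∧ T' p.1 p.2 = m + 1} := by
          ext ⟨i, j⟩
          simp only [Set.mem_setOf_eq, hTdef]
          constructor
          · rintro ⟨h1, h2⟩
            rcases lt_or_ge j (lam' i) with h3 | h3
            · rw [if_pos h3] at h2; exact ⟨h3, h2⟩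
            · rw [if_neg (by omega), if_pos h1] at h2
              omega
          · rintro ⟨h1, h2⟩
            refine ⟨lt_of_lt_of_le h1 (hlam'le i), ?_⟩
            rw [if_pos h1]; exact h2
        have heq : entryCount lam T m = entryCount lam' T' m := by
          rw [entryCount, entryCount, hset]
        rw [heq, hT'w m]
        rcases lt_or_ge m (K - 1) with h | h
        · simp only [hmu'def]
          rw [if_pos h]
        · rw [hmu'K m h, hK m (by omega)]

theorem stmt1 (n : ℕ) (lam mu : ℕ → ℕ)
    (hlp : IsPartition lam) (hln : psize lam = n)
    (hmp : IsPartition mu) (hmn : psize mu = n)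
    (hd : Dominates lam mu) :
    0 < kostka lam mu := by
  apply kostka_pos_of_exists hlp hmp
  obtain ⟨T, h1, h2⟩ := exists_ssyt n lam mu hlp hln hmp hmn hd
  exact ⟨T, h1, h2⟩
end

section
/- Let λ and μ be partitions of n with ℓ(μ) = l, λ dominating μ, and suppose λ_1 > λ_2 = λ_3 = ... = λ_l (where λ_i = 0 for i > ℓ(λ)). Then K_{λμ} = 1. -/
open Finset

lemma lt_card_filter_range_iff {P : ℕ → Prop} [DecidablePred P] {a j : ℕ}
    (hP : ∀ ⦃i k⦄, i ≤ k → k < a → P k → P i) (hj : j < a) :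
    j < #{k ∈ range a | P k} ↔ P j := by
  constructor
  · intro hlt
    by_contra hPj
    have hsub : {k ∈ range a | P k} ⊆ range j := fun k hk => by
      simp only [mem_filter, mem_range] at hk ⊢
      by_contra hjk
      exact hPj (hP (not_lt.mp hjk) hk.1 hk.2)
    simpa using hlt.trans_le (card_le_card hsub)
  · intro hPj
    have hsub : range (j + 1) ⊆ {k ∈ range a | P k} := fun k hk => by
      simp only [mem_filter, mem_range] at hk ⊢
      exact ⟨by omega, hP (by omega) hj hPj⟩
    simpa using card_le_card hsub

lemma card_filter_range_le_eq_sum (f : ℕ → ℕ) (a v : ℕ) :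
    #{k ∈ range a | f k ≤ v} = ∑ w ∈ range (v + 1), #{k ∈ range a | f k = w} := by
  rw [card_eq_sum_card_fiberwise (f := f) (t := range (v + 1))
    fun k hk => by simpa [Nat.lt_succ_iff] using (mem_filter.mp hk).2]
  refine sum_congr rfl fun w hw => ?_
  rw [filter_filter]
  refine congrArg card (filter_congr fun k _ => ?_)
  simp only [mem_range] at hw
  constructor
  · exact And.right
  · intro hk
    exact ⟨by omega, hk⟩

lemma eqOn_of_card_filter_eq {a : ℕ} {f g : ℕ → ℕ} (hf : MonotoneOn f (Set.Iio a))
    (hg : MonotoneOn g (Set.Iio a))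
    (h : ∀ w, #{k ∈ range a | f k = w} = #{k ∈ range a | g k = w}) :
    Set.EqOn f g (Set.Iio a) := by
  -- `φ j ≤ v` says that `j` lies below the number of entries `≤ v`, which `h` pins down.
  have le_iff : ∀ φ : ℕ → ℕ, MonotoneOn φ (Set.Iio a) → ∀ j < a, ∀ v,
      φ j ≤ v ↔ j < #{k ∈ range a | φ k ≤ v} := fun φ hφ j hj v =>
    (lt_card_filter_range_iff (fun i k hik hk hkv => (hφ (hik.trans_lt hk) hk hik).trans hkv)
      hj).symm
  intro j (hj : j < a)
  have hfg : ∀ v, f j ≤ v ↔ g j ≤ v := fun v => by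
    rw [le_iff f hf j hj, le_iff g hg j hj, card_filter_range_le_eq_sum,
      card_filter_range_le_eq_sum]
    simp only [h]
  exact le_antisymm ((hfg _).mpr le_rfl) ((hfg _).mp le_rfl)

/-- The weakly increasing row with `c m` entries equal to `m + 1` for each `m < l`. -/
def rowOfCounts (c : ℕ → ℕ) (l j : ℕ) : ℕ :=
  #{m ∈ range l | ∑ i ∈ range m, c i ≤ j}

section RowOfCounts

variable {c : ℕ → ℕ} {l : ℕ}

lemma monotone_rowOfCounts (c : ℕ → ℕ) (l : ℕ) : Monotone (rowOfCounts c l) :=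
  fun _ _ hjj' => card_le_card (monotone_filter_right _ fun _ _ hm => hm.trans hjj')

lemma rowOfCounts_le (c : ℕ → ℕ) (l j : ℕ) : rowOfCounts c l j ≤ l :=
  (card_filter_le _ _).trans_eq (card_range l)

lemma lt_rowOfCounts_iff {m : ℕ} (j : ℕ) (hm : m < l) :
    m < rowOfCounts c l j ↔ ∑ i ∈ range m, c i ≤ j :=
  lt_card_filter_range_iff
    (fun _ _ hik _ hk => (sum_le_sum_of_subset (range_subset_range.mpr hik)).trans hk) hm

lemma rowOfCounts_eq_succ_iff {m j : ℕ} (hm : m < l) (hj : j < ∑ i ∈ range l, c i) :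
    rowOfCounts c l j = m + 1 ↔ ∑ i ∈ range m, c i ≤ j ∧ j < ∑ i ∈ range (m + 1), c i := by
  rw [← lt_rowOfCounts_iff j hm]
  rcases (show m + 1 ≤ l by omega).lt_or_eq with hm' | rfl
  · rw [← not_le (b := j), ← lt_rowOfCounts_iff j hm']
    omega
  · simp only [hj, and_true]
    have := rowOfCounts_le c (m + 1) j
    omega

lemma card_filter_rowOfCounts_eq (hc : ∀ m, l ≤ m → c m = 0) (m : ℕ) :
    #{j ∈ range (∑ i ∈ range l, c i) | rowOfCounts c l j = m + 1} = c m := by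
  rcases lt_or_ge m l with hm | hm
  · have hmono : ∑ i ∈ range (m + 1), c i ≤ ∑ i ∈ range l, c i :=
      sum_le_sum_of_subset (range_subset_range.mpr hm)
    have hfilter : {j ∈ range (∑ i ∈ range l, c i) | rowOfCounts c l j = m + 1} =
        Ico (∑ i ∈ range m, c i) (∑ i ∈ range (m + 1), c i) := by
      ext j
      simp only [mem_filter, mem_range, mem_Ico]
      constructor
      · rintro ⟨hj, hr⟩
        exact (rowOfCounts_eq_succ_iff hm hj).mp hr
      · rintro hj
        exact ⟨by omega, (rowOfCounts_eq_succ_iff hm (by omega)).mpr hj⟩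
    rw [hfilter, Nat.card_Ico, sum_range_succ]
    omega
  · rw [hc m hm, card_eq_zero, filter_eq_empty_iff]
    intro j _
    have := rowOfCounts_le c l j
    omega

end RowOfCounts

lemma psize_eq_sum_range {f : ℕ → ℕ} {N : ℕ} (h : ∀ i, N ≤ i → f i = 0) :
    psize f = ∑ i ∈ range N, f i :=
  finsum_eq_sum_of_support_subset f fun i hi => by
    by_contra hiN
    exact hi (h i (by simpa using hiN))

lemma Dominates.eq_zero_of_psize_eq {lam mu : ℕ → ℕ} {l : ℕ} (hd : Dominates lam mu)
    (hlam : ∃ N, ∀ i, N ≤ i → lam i = 0) (hmu : ∀ i, l ≤ i → mu i = 0)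
    (hsize : psize lam = psize mu) {i : ℕ} (hi : l ≤ i) : lam i = 0 := by
  obtain ⟨N, hN⟩ := hlam
  have hlM : l ≤ max N (i + 1) := by omega
  have htail : ∑ k ∈ Ico l (max N (i + 1)), lam k = 0 := by
    have hsplit := sum_range_add_sum_Ico lam hlM
    rw [← psize_eq_sum_range fun k hk => hN k (le_of_max_le_left hk), hsize,
      psize_eq_sum_range hmu] at hsplit
    have := hd l
    omega
  exact sum_eq_zero_iff.mp htail i (mem_Ico.mpr ⟨hi, by omega⟩)

lemma Dominates.le_of_sum_range_succ_eq {lam mu : ℕ → ℕ} {k : ℕ} (hd : Dominates lam mu)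
    (h : ∑ i ∈ range (k + 1), lam i = ∑ i ∈ range (k + 1), mu i) : lam k ≤ mu k := by
  have := hd k
  rw [sum_range_succ, sum_range_succ] at h
  omega

lemma lt_of_lt_apply {lam : ℕ → ℕ} {l i j : ℕ} (h : ∀ i, l ≤ i → lam i = 0)
    (hj : j < lam i) : i < l := by
  by_contra! hi
  rw [h i hi] at hj
  exact Nat.not_lt_zero j hj

lemma IsPartition.finite_cells {lam : ℕ → ℕ} (h : IsPartition lam) :
    {p : ℕ × ℕ | p.2 < lam p.1}.Finite := by
  obtain ⟨hanti, N, hN⟩ := h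
  refine ((Set.finite_Iio N).prod (Set.finite_Iio (lam 0))).subset
    fun p (hp : p.2 < lam p.1) => ⟨lt_of_lt_apply hN hp, hp.trans_le (hanti (Nat.zero_le _))⟩

section Tableaux

variable {lam : ℕ → ℕ} {T : ℕ → ℕ → ℕ}

lemma IsSSYT.add_le (hT : IsSSYT lam T) (hlam : Antitone lam) {i k j : ℕ} (hik : i ≤ k)
    (hj : j < lam k) : T i j + (k - i) ≤ T k j := by
  induction k, hik using Nat.le_induction with
  | base => simp
  | succ k hik ih =>
    have hcol := hT.2.2.2 k (k + 1) j k.lt_succ_self hj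
    have := ih (hj.trans_le (hlam k.le_succ))
    omega

lemma IsSSYT.succ_le (hT : IsSSYT lam T) (hlam : Antitone lam) {i j : ℕ} (hj : j < lam i) :
    i + 1 ≤ T i j := by
  have := hT.add_le hlam (Nat.zero_le i) hj
  have := hT.1 0 j (hj.trans_le (hlam (Nat.zero_le i)))
  omega

lemma IsSSYT.eq_succ_of_le (hT : IsSSYT lam T) (hlam : Antitone lam) {i k j : ℕ}
    (hbot : T k j ≤ k + 1) (hik : i ≤ k) (hj : j < lam k) : T i j = i + 1 := by
  have := hT.add_le hlam hik hj
  have := hT.succ_le hlam (hj.trans_le (hlam hik))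
  omega

lemma HasWeight.le_of_forall_eq_zero {mu : ℕ → ℕ} {l i j : ℕ} (hw : HasWeight lam T mu)
    (hcells : {p : ℕ × ℕ | p.2 < lam p.1}.Finite) (hmu : ∀ m, l ≤ m → mu m = 0)
    (hj : j < lam i) : T i j ≤ l := by
  by_contra! hl
  obtain ⟨m, hm⟩ : ∃ m, T i j = m + 1 := ⟨T i j - 1, by omega⟩
  have hpos : 0 < entryCount lam T m :=
    (Set.ncard_pos (hcells.subset fun p hp => hp.1)).mpr ⟨(i, j), hj, hm⟩
  rw [hw, hmu m (by omega)] at hpos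
  exact hpos.false

def tableauOfFirstRow (lam f : ℕ → ℕ) (i j : ℕ) : ℕ :=
  if j < lam i then if i = 0 then f j else i + 1 else 0

lemma IsSSYT.eq_tableauOfFirstRow (hT : IsSSYT lam T)
    (hrows : ∀ i j, 1 ≤ i → j < lam i → T i j = i + 1) :
    T = tableauOfFirstRow lam (T 0) := by
  funext i j
  unfold tableauOfFirstRow
  split_ifs with hj hi
  · rw [hi]
  · exact hrows i j (Nat.one_le_iff_ne_zero.mpr hi) hj
  · exact hT.2.1 i j (not_lt.mp hj)

lemma tableauOfFirstRow_congr {f g : ℕ → ℕ} (h : Set.EqOn f g (Set.Iio (lam 0))) :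
    tableauOfFirstRow lam f = tableauOfFirstRow lam g := by
  funext i j
  unfold tableauOfFirstRow
  split_ifs with hj hi
  · subst hi
    exact h hj
  all_goals rfl

lemma isSSYT_tableauOfFirstRow {f : ℕ → ℕ} (hlam : Antitone lam)
    (hpos : ∀ j < lam 0, 1 ≤ f j) (hmono : Monotone f) (hcol : ∀ j < lam 1, f j ≤ 1) :
    IsSSYT lam (tableauOfFirstRow lam f) := by
  refine ⟨fun i j hj => ?_, fun i j hj => ?_, fun i j k hjk hk => ?_, fun i i' j hii' hj => ?_⟩
  · unfold tableauOfFirstRow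
    split_ifs with hi
    · exact hpos j (hi ▸ hj)
    · omega
  · simp [tableauOfFirstRow, not_lt.mpr hj]
  · simp only [tableauOfFirstRow, hk, lt_of_le_of_lt hjk hk, if_true]
    split_ifs
    · exact hmono hjk
    · rfl
  · have hj' : j < lam i := hj.trans_le (hlam hii'.le)
    have hi' : i' ≠ 0 := by omega
    simp only [tableauOfFirstRow, hj, hj', hi', if_true, if_false]
    split_ifs with hi
    · have := hcol j (hj.trans_le (hlam (by omega)))
      omega
    · omega

lemma entryCount_tableauOfFirstRow (lam f : ℕ → ℕ) (m : ℕ) :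
    entryCount lam (tableauOfFirstRow lam f) m =
      #{j ∈ range (lam 0) | f j = m + 1} + if m = 0 then 0 else lam m := by
  have hcells : {p : ℕ × ℕ | p.2 < lam p.1 ∧ tableauOfFirstRow lam f p.1 p.2 = m + 1} =
      ↑(({0} ×ˢ {j ∈ range (lam 0) | f j = m + 1}) ∪
        ({m} ×ˢ range (if m = 0 then 0 else lam m))) := by
    ext ⟨i, j⟩
    simp only [tableauOfFirstRow, Set.mem_ofPred_eq, coe_union, coe_product, coe_singleton,
      coe_filter, coe_range, Set.mem_union, Set.mem_prod, Set.mem_singleton_iff,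
      Set.mem_Iio, mem_range]
    by_cases hi : i = 0 <;> split_ifs <;> grind
  have hdisj : Disjoint ({0} ×ˢ {j ∈ range (lam 0) | f j = m + 1})
      ({m} ×ˢ range (if m = 0 then 0 else lam m)) := by
    split_ifs with hm
    · simp
    · exact disjoint_product.mpr (Or.inl (disjoint_singleton.mpr (Ne.symm hm)))
  rw [entryCount, hcells, Set.ncard_coe_finset, card_union_of_disjoint hdisj, card_product,
    card_product, card_singleton, card_singleton, card_range, one_mul, one_mul]

lemma IsSSYT.eq_of_entryCount_eq {T' : ℕ → ℕ → ℕ} (hT : IsSSYT lam T) (hT' : IsSSYT lam T')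
    (hrows : ∀ i j, 1 ≤ i → j < lam i → T i j = i + 1)
    (hrows' : ∀ i j, 1 ≤ i → j < lam i → T' i j = i + 1)
    (hcount : ∀ m, entryCount lam T m = entryCount lam T' m) : T = T' := by
  have hrow : ∀ w, #{j ∈ range (lam 0) | T 0 j = w} = #{j ∈ range (lam 0) | T' 0 j = w}
  | 0 => by
    rw [filter_false_of_mem fun j hj => Nat.one_le_iff_ne_zero.mp (hT.1 0 j (mem_range.mp hj)),
      filter_false_of_mem fun j hj => Nat.one_le_iff_ne_zero.mp (hT'.1 0 j (mem_range.mp hj))]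
  | m + 1 => by
    have := hcount m
    rw [hT.eq_tableauOfFirstRow hrows, hT'.eq_tableauOfFirstRow hrows',
      entryCount_tableauOfFirstRow, entryCount_tableauOfFirstRow] at this
    omega
  rw [hT.eq_tableauOfFirstRow hrows, hT'.eq_tableauOfFirstRow hrows']
  exact tableauOfFirstRow_congr <| eqOn_of_card_filter_eq
    (fun j _ k hk hjk => hT.2.2.1 0 j k hjk hk) (fun j _ k hk hjk => hT'.2.2.1 0 j k hjk hk) hrow

end Tableaux

section

variable {lam mu : ℕ → ℕ} {l : ℕ}

/-- Multiplicity of the entry `m + 1` in the first row when each row `i ≥ 1` is filled with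
`i + 1`: the `lam m` cells of row `m` already carry that entry. -/
def firstRowCounts (lam mu : ℕ → ℕ) (m : ℕ) : ℕ :=
  mu m - if m = 0 then 0 else lam m

def canonicalTableau (lam mu : ℕ → ℕ) (l : ℕ) : ℕ → ℕ → ℕ :=
  tableauOfFirstRow lam (rowOfCounts (firstRowCounts lam mu) l)

lemma sum_firstRowCounts (hlam_zero : ∀ i, l ≤ i → lam i = 0)
    (hrows : ∀ i, 1 ≤ i → i < l → lam i = lam 1) (hb : ∀ m < l, lam 1 ≤ mu m)
    (hsum : ∑ m ∈ range l, lam m = ∑ m ∈ range l, mu m) :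
    ∑ m ∈ range l, firstRowCounts lam mu m = lam 0 := by
  obtain _ | k := l
  · simp [hlam_zero 0 le_rfl]
  have hle : ∀ i ∈ range k, lam (i + 1) ≤ mu (i + 1) := fun i hi => by
    rw [hrows (i + 1) (by omega) (by simp at hi; omega)]
    exact hb (i + 1) (by simp at hi; omega)
  rw [sum_range_succ', sum_range_succ'] at hsum
  have := sum_le_sum hle
  simp only [sum_range_succ', firstRowCounts, Nat.add_one_ne_zero, if_false, if_true,
    sum_tsub_distrib _ hle]
  omega

lemma isSSYT_canonicalTableau (hlam : Antitone lam) (hlam_zero : ∀ i, l ≤ i → lam i = 0)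
    (hb : ∀ m < l, lam 1 ≤ mu m) : IsSSYT lam (canonicalTableau lam mu l) := by
  refine isSSYT_tableauOfFirstRow hlam (fun j hj => ?_) (monotone_rowOfCounts _ l)
    fun j hj => ?_
  · exact (lt_rowOfCounts_iff j (lt_of_lt_apply hlam_zero hj)).mpr (by simp)
  · have hl : 1 < l := lt_of_lt_apply hlam_zero hj
    rw [← not_lt, lt_rowOfCounts_iff j hl]
    have := hb 0 (by omega)
    simp only [sum_range_one, firstRowCounts, if_true, tsub_zero]
    omega

lemma hasWeight_canonicalTableau (hlam_zero : ∀ i, l ≤ i → lam i = 0)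
    (hrows : ∀ i, 1 ≤ i → i < l → lam i = lam 1) (hmu_zero : ∀ m, l ≤ m → mu m = 0)
    (hb : ∀ m < l, lam 1 ≤ mu m) (hsum : ∑ m ∈ range l, lam m = ∑ m ∈ range l, mu m) :
    HasWeight lam (canonicalTableau lam mu l) mu := by
  have hcounts : ∀ k, l ≤ k → firstRowCounts lam mu k = 0 := fun k hk => by
    simp [firstRowCounts, hmu_zero k hk]
  intro m
  rw [canonicalTableau, entryCount_tableauOfFirstRow,
    ← sum_firstRowCounts hlam_zero hrows hb hsum, card_filter_rowOfCounts_eq hcounts,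
    firstRowCounts]
  refine Nat.sub_add_cancel ?_
  split_ifs with hm
  · exact Nat.zero_le _
  · rcases lt_or_ge m l with hml | hml
    · exact (hrows m (by omega) hml).trans_le (hb m hml)
    · exact (hlam_zero m hml).trans_le (Nat.zero_le _)

lemma IsSSYT.apply_eq_succ_of_hasWeight {T : ℕ → ℕ → ℕ} (hT : IsSSYT lam T)
    (hw : HasWeight lam T mu) (hlam : IsPartition lam) (hlam_zero : ∀ i, l ≤ i → lam i = 0)
    (hrows : ∀ i, 1 ≤ i → i < l → lam i = lam 1) (hmu_zero : ∀ m, l ≤ m → mu m = 0)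
    {i j : ℕ} (hi : 1 ≤ i) (hj : j < lam i) : T i j = i + 1 := by
  have hil : i < l := lt_of_lt_apply hlam_zero hj
  have hj' : j < lam (l - 1) := by
    rwa [hrows (l - 1) (by omega) (by omega), ← hrows i hi hil]
  refine hT.eq_succ_of_le hlam.1 ?_ (by omega) hj'
  have := hw.le_of_forall_eq_zero hlam.finite_cells hmu_zero hj'
  omega

lemma kostka_eq_one_of_rows_eq (hlam : IsPartition lam) (hlam_zero : ∀ i, l ≤ i → lam i = 0)
    (hrows : ∀ i, 1 ≤ i → i < l → lam i = lam 1) (hmu_zero : ∀ m, l ≤ m → mu m = 0)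
    (hb : ∀ m < l, lam 1 ≤ mu m) (hsum : ∑ m ∈ range l, lam m = ∑ m ∈ range l, mu m) :
    kostka lam mu = 1 := by
  have hT₀ := isSSYT_canonicalTableau (mu := mu) hlam.1 hlam_zero hb
  have hw₀ := hasWeight_canonicalTableau hlam_zero hrows hmu_zero hb hsum
  have forced {T : ℕ → ℕ → ℕ} (hT : IsSSYT lam T) (hw : HasWeight lam T mu) :
      ∀ i j, 1 ≤ i → j < lam i → T i j = i + 1 := fun _ _ hi hj =>
    hT.apply_eq_succ_of_hasWeight hw hlam hlam_zero hrows hmu_zero hi hj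
  refine Set.ncard_eq_one.mpr ⟨canonicalTableau lam mu l, Set.eq_singleton_iff_unique_mem.mpr
    ⟨⟨hT₀, hw₀⟩, fun T ⟨hT, hw⟩ => ?_⟩⟩
  exact hT.eq_of_entryCount_eq hT₀ (forced hT hw) (forced hT₀ hw₀) fun m =>
    (hw m).trans (hw₀ m).symm

end

theorem stmt3_general (n l : ℕ) (lam mu : ℕ → ℕ)
    (hlp : IsPartition lam) (hln : psize lam = n)
    (hmp : IsPartition mu) (hmn : psize mu = n)
    (hml : PartLength mu l)
    (hd : Dominates lam mu)
    (h2 : ∀ i, 1 ≤ i → i < l → lam i = lam 1) :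
    kostka lam mu = 1 := by
  have hlam_zero : ∀ i, l ≤ i → lam i = 0 := fun _ =>
    hd.eq_zero_of_psize_eq hlp.2 hml.2 (hln.trans hmn.symm)
  have hsum : ∑ m ∈ range l, lam m = ∑ m ∈ range l, mu m := by
    rw [← psize_eq_sum_range hlam_zero, ← psize_eq_sum_range hml.2, hln, hmn]
  have hb : ∀ m < l, lam 1 ≤ mu m := by
    intro m hm
    obtain ⟨k, rfl⟩ : ∃ k, l = k + 1 := ⟨l - 1, by omega⟩
    calc lam 1 ≤ lam k := by
          rcases Nat.eq_zero_or_pos k with rfl | hk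
          · exact hlp.1 zero_le_one
          · exact (h2 k hk k.lt_succ_self).ge
      _ ≤ mu k := hd.le_of_sum_range_succ_eq hsum
      _ ≤ mu m := hmp.1 (Nat.lt_succ_iff.mp hm)
  exact kostka_eq_one_of_rows_eq hlp hlam_zero h2 hml.2 hb hsum

theorem stmt3 (n l : ℕ) (lam mu : ℕ → ℕ)
    (hlp : IsPartition lam) (hln : psize lam = n)
    (hmp : IsPartition mu) (hmn : psize mu = n)
    (hml : PartLength mu l)
    (hd : Dominates lam mu)
    (h1 : lam 1 < lam 0)
    (h2 : ∀ i, 1 ≤ i → i < l → lam i = lam 1) :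
    kostka lam mu = 1 :=
  stmt3_general n l lam mu hlp hln hmp hmn hml hd h2
end

section
/- Let λ and μ be partitions of n with ℓ(μ) = l, λ dominating μ, and suppose λ_1 = λ_2 = ... = λ_{l-1} > λ_l (where λ_i = 0 for i > ℓ(λ)). Then K_{λμ} = 1. -/
/-- threshold function for the canonical tableau -/
def tfn (mu : ℕ → ℕ) (a i : ℕ) : ℕ := (∑ k ∈ Finset.range (i+1), mu k) - i * a

/-- the canonical tableau -/
def T0 (lam mu : ℕ → ℕ) (i j : ℕ) : ℕ :=
  if j < lam i then (if j < tfn mu (lam 0) i then i + 1 else i + 2) else 0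

lemma psize_eq (f : ℕ → ℕ) (N : ℕ) (h : ∀ i, N ≤ i → f i = 0) :
    psize f = ∑ i ∈ Finset.range N, f i := by
  apply finsum_eq_sum_of_support_subset
  intro x hx
  simp only [Function.mem_support] at hx
  simp only [Finset.coe_range, Set.mem_Iio]
  by_contra h'
  exact hx (h x (le_of_not_gt h'))

lemma count_zero (lam : ℕ → ℕ) (T : ℕ → ℕ → ℕ) (s : ℕ → ℕ)
    (hs : ∀ i, s i ≤ lam i)
    (hf : ∀ i j, j < lam i → T i j = if j < s i then i + 1 else i + 2) :
    entryCount lam T 0 = s 0 := by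
  have hset : {p : ℕ × ℕ | p.2 < lam p.1 ∧ T p.1 p.2 = 0 + 1}
      = ↑(({0} ×ˢ Finset.range (s 0)) : Finset (ℕ × ℕ)) := by
    ext ⟨i, j⟩
    simp only [Set.mem_setOf_eq, Finset.mem_coe,
      Finset.mem_product, Finset.mem_singleton, Finset.mem_range]
    constructor
    · rintro ⟨hj, hT⟩
      rw [hf i j hj] at hT
      by_cases hc : j < s i
      · rw [if_pos hc] at hT
        have : i = 0 := by omega
        subst this; exact ⟨rfl, hc⟩
      · rw [if_neg hc] at hT; omega
    · rintro ⟨hi, hj⟩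
      subst hi
      have hjl : j < lam 0 := lt_of_lt_of_le hj (hs 0)
      exact ⟨hjl, by rw [hf 0 j hjl, if_pos hj]⟩
  rw [entryCount, hset, Set.ncard_coe_finset]
  simp

lemma count_succ (lam : ℕ → ℕ) (T : ℕ → ℕ → ℕ) (s : ℕ → ℕ) (m : ℕ)
    (hs : ∀ i, s i ≤ lam i)
    (hf : ∀ i j, j < lam i → T i j = if j < s i then i + 1 else i + 2) :
    entryCount lam T (m+1) = s (m+1) + (lam m - s m) := by
  have hset : {p : ℕ × ℕ | p.2 < lam p.1 ∧ T p.1 p.2 = (m+1) + 1}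
      = ↑((({m+1} ×ˢ Finset.range (s (m+1))) ∪ ({m} ×ˢ Finset.Ico (s m) (lam m))) : Finset (ℕ × ℕ)) := by
    ext ⟨i, j⟩
    simp only [Set.mem_setOf_eq,
      Finset.mem_coe, Finset.mem_union, Finset.mem_product, Finset.mem_singleton,
      Finset.mem_range, Finset.mem_Ico]
    constructor
    · rintro ⟨hj, hT⟩
      rw [hf i j hj] at hT
      by_cases hc : j < s i
      · rw [if_pos hc] at hT
        have : i = m + 1 := by omega
        subst this; exact Or.inl ⟨rfl, hc⟩
      · rw [if_neg hc] at hT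
        obtain rfl : m = i := by omega
        exact Or.inr ⟨rfl, le_of_not_gt hc, hj⟩
    · rintro (⟨hi, hj⟩ | ⟨hi, hj1, hj2⟩)
      · subst hi
        have hjl : j < lam (m+1) := lt_of_lt_of_le hj (hs (m+1))
        exact ⟨hjl, by rw [hf (m+1) j hjl, if_pos hj]⟩
      · constructor
        · rw [hi]; exact hj2
        · rw [hi, hf m j hj2, if_neg (by omega)]
  rw [entryCount, hset, Set.ncard_coe_finset]
  rw [Finset.card_union_of_disjoint]
  · simp
  · rw [Finset.disjoint_left]
    rintro ⟨i, j⟩ hp hq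
    simp only [Finset.mem_product, Finset.mem_singleton] at hp hq
    omega

theorem stmt4 (n l : ℕ) (lam mu : ℕ → ℕ)
    (hlp : IsPartition lam) (hln : psize lam = n)
    (hmp : IsPartition mu) (hmn : psize mu = n)
    (hml : PartLength mu l)
    (hd : Dominates lam mu)
    (h1 : ∀ i, i < l - 1 → lam i = lam 0)
    (h2 : lam (l - 1) < lam 0) :
    kostka lam mu = 1 := by
  obtain ⟨hlam_anti, N, hN⟩ := hlp
  obtain ⟨hmu_anti, -⟩ := hmp
  obtain ⟨hmu_pos, hmu_zero⟩ := hml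
  have hl2 : 2 ≤ l := by
    by_contra h
    have hl0 : l - 1 = 0 := by omega
    rw [hl0] at h2
    exact absurd h2 (lt_irrefl _)
  have hmusum : ∑ i ∈ Finset.range l, mu i = n := by
    rw [← hmn, psize_eq mu l hmu_zero]
  have hlam_le_a : ∀ i, lam i ≤ lam 0 := fun i => hlam_anti (Nat.zero_le i)
  have hmu0a : mu 0 ≤ lam 0 := by have := hd 1; simpa using this
  have hmua : ∀ k, mu k ≤ lam 0 := fun k => le_trans (hmu_anti (Nat.zero_le k)) hmu0a
  have key0 : ∀ M, N ≤ M → ∑ i ∈ Finset.range M, lam i = n := by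
    intro M hM
    rw [← hln, psize_eq lam M (fun i hi => hN i (le_trans hM hi))]
  have hlamsum_ge : n ≤ ∑ i ∈ Finset.range l, lam i := hmusum ▸ hd l
  have hlamsum_le : ∑ i ∈ Finset.range l, lam i ≤ n := by
    rw [← key0 (max N l) (le_max_left _ _)]
    exact Finset.sum_le_sum_of_subset
      (Finset.range_subset_range.mpr (le_max_right _ _))
  have hlam_zero : ∀ i, l ≤ i → lam i = 0 := by
    intro i hi
    have hM := key0 (max N (i+1)) (le_max_left _ _)
    have hsub : Finset.range l ⊆ Finset.range (max N (i+1)) :=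
      Finset.range_subset_range.mpr (by omega)
    have hsd := Finset.sum_sdiff (f := lam) hsub
    have hz : ∑ x ∈ Finset.range (max N (i+1)) \ Finset.range l, lam x = 0 := by omega
    refine Finset.sum_eq_zero_iff.mp hz i ?_
    simp only [Finset.mem_sdiff, Finset.mem_range]
    omega
  have hn_eq : (l-1) * lam 0 + lam (l-1) = n := by
    have hsum : ∑ i ∈ Finset.range l, lam i = (l-1) * lam 0 + lam (l-1) := by
      conv_lhs => rw [show l = (l-1)+1 by omega]
      rw [Finset.sum_range_succ]
      congr 1
      rw [Finset.sum_congr rfl (fun i hi => h1 i (Finset.mem_range.mp hi))]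
      simp [mul_comm]
    omega
  -- facts about the threshold function t
  set t : ℕ → ℕ := tfn mu (lam 0) with ht_def
  have ht0 : t 0 = mu 0 := by simp [ht_def, tfn]
  have hkey : ∀ m, m < l → m * lam 0 + lam (l-1) ≤ ∑ k ∈ Finset.range (m+1), mu k := by
    intro m hm
    have hsplit := Finset.sum_range_add_sum_Ico mu (show m+1 ≤ l by omega)
    have hbound : ∑ k ∈ Finset.Ico (m+1) l, mu k ≤ (l - (m+1)) * lam 0 := by
      calc ∑ k ∈ Finset.Ico (m+1) l, mu k ≤ ∑ _k ∈ Finset.Ico (m+1) l, lam 0 :=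
            Finset.sum_le_sum (fun k _ => hmua k)
        _ = (l - (m+1)) * lam 0 := by simp [Nat.card_Ico, mul_comm]
    have hmul : (l - 1) * lam 0 = m * lam 0 + (l - (m+1)) * lam 0 := by
      rw [← Nat.add_mul]; congr 1; omega
    omega
  have hdom_le : ∀ m, ∑ k ∈ Finset.range (m+1), mu k ≤ (m+1) * lam 0 := by
    intro m
    calc ∑ k ∈ Finset.range (m+1), mu k ≤ ∑ k ∈ Finset.range (m+1), lam k := hd (m+1)
      _ ≤ ∑ _k ∈ Finset.range (m+1), lam 0 := Finset.sum_le_sum (fun k _ => hlam_le_a k)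
      _ = (m+1) * lam 0 := by simp [mul_comm]
  have ht_le_a : ∀ m, t m ≤ lam 0 := by
    intro m
    have h := hdom_le m
    have e : (m+1) * lam 0 = m * lam 0 + lam 0 := by ring
    simp only [ht_def, tfn]
    omega
  have ht_last : t (l-1) = lam (l-1) := by
    have e : (l-1) + 1 = l := by omega
    simp only [ht_def, tfn, e, hmusum]
    omega
  have ht_zero : ∀ m, l ≤ m → t m = 0 := by
    intro m hm
    have hs : ∑ k ∈ Finset.range (m+1), mu k = n := by
      rw [← hmusum]
      symm
      apply Finset.sum_subset (Finset.range_subset_range.mpr (by omega))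
      intro x _ hx
      exact hmu_zero x (by simp only [Finset.mem_range] at hx; omega)
    have e1 : l * lam 0 = (l-1) * lam 0 + lam 0 := by
      conv_lhs => rw [show l = (l-1)+1 by omega]
      ring
    have e2 : l * lam 0 ≤ m * lam 0 := Nat.mul_le_mul_right _ hm
    simp only [ht_def, tfn, hs]
    omega
  have ht_rec : ∀ m, m + 1 < l → t m + mu (m+1) = t (m+1) + lam 0 := by
    intro m hm
    have k1 := hkey m (by omega)
    have k2 := hkey (m+1) hm
    have e : ∑ k ∈ Finset.range (m+1+1), mu k = ∑ k ∈ Finset.range (m+1), mu k + mu (m+1) :=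
      Finset.sum_range_succ mu (m+1)
    have e2 : (m+1) * lam 0 = m * lam 0 + lam 0 := by ring
    simp only [ht_def, tfn] at *
    omega
  have ht_le_lam : ∀ i, t i ≤ lam i := by
    intro i
    by_cases hi1 : i < l - 1
    · rw [h1 i hi1]; exact ht_le_a i
    · by_cases hi2 : i < l
      · rw [show i = l - 1 by omega, ht_last]
      · rw [ht_zero i (by omega)]; exact Nat.zero_le _
  have hT0form : ∀ i j, j < lam i → T0 lam mu i j = if j < t i then i+1 else i+2 := by
    intro i j hj
    simp only [T0, if_pos hj, ht_def]
  -- T0 is a SSYT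
  have hT0ssyt : IsSSYT lam (T0 lam mu) := by
    refine ⟨?_, ?_, ?_, ?_⟩
    · intro i j hj; rw [hT0form i j hj]; split <;> omega
    · intro i j hj; simp only [T0, if_neg (by omega : ¬ j < lam i)]
    · intro i j k hjk hk
      rw [hT0form i j (lt_of_le_of_lt hjk hk), hT0form i k hk]
      split_ifs <;> omega
    · intro i i' j hii' hj
      have hj_i : j < lam i := lt_of_lt_of_le hj (hlam_anti (le_of_lt hii'))
      rw [hT0form i j hj_i, hT0form i' j hj]
      by_cases hcase : i' = i + 1
      · subst hcase
        have hi'l : i + 1 < l := by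
          by_contra h
          rw [hlam_zero (i+1) (by omega)] at hj; omega
        have hmono : t (i+1) ≤ t i := by
          have := ht_rec i hi'l
          have := hmua (i+1)
          omega
        split_ifs <;> omega
      · split_ifs <;> omega
  -- T0 has weight mu
  have hT0w : HasWeight lam (T0 lam mu) mu := by
    intro m
    cases m with
    | zero => rw [count_zero lam _ t ht_le_lam hT0form, ht0]
    | succ m =>
      rw [count_succ lam _ t m ht_le_lam hT0form]
      by_cases h1' : m + 1 < l
      · have hrec := ht_rec m h1'
        have hlm : lam m = lam 0 := h1 m (by omega)
        have := ht_le_a m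
        omega
      · have hz := ht_zero (m+1) (by omega)
        have hmu' := hmu_zero (m+1) (by omega)
        by_cases hml' : m < l
        · have e : t m = lam m := by
            rw [show m = l - 1 by omega]; exact ht_last
          omega
        · have e1 : lam m = 0 := hlam_zero m (by omega)
          have e2 : t m = 0 := ht_zero m (by omega)
          omega
  -- uniqueness
  have huniq : ∀ T, IsSSYT lam T → HasWeight lam T mu → T = T0 lam mu := by
    intro T hS hW
    obtain ⟨hpos, hout, hrow, hcol⟩ := hS
    have hfin : ∀ m : ℕ, {p : ℕ × ℕ | p.2 < lam p.1 ∧ T p.1 p.2 = m + 1}.Finite := by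
      intro m
      apply Set.Finite.subset (Finset.range l ×ˢ Finset.range (lam 0)).finite_toSet
      rintro ⟨i, j⟩ ⟨hj, -⟩
      simp only [Finset.coe_product, Set.mem_prod, Finset.mem_coe, Finset.mem_range]
      constructor
      · by_contra h
        rw [hlam_zero i (by omega)] at hj
        omega
      · exact lt_of_lt_of_le hj (hlam_le_a i)
    have hlb : ∀ i j, j < lam i → i + 1 ≤ T i j := by
      intro i
      induction i with
      | zero => intro j hj; exact hpos 0 j hj
      | succ i ih =>
        intro j hj
        have hji : j < lam i := lt_of_lt_of_le hj (hlam_anti (Nat.le_succ i))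
        have hc := hcol i (i+1) j (Nat.lt_succ_self i) hj
        have := ih j hji
        omega
    have hub : ∀ i j, j < lam i → T i j ≤ l := by
      intro i j hj
      by_contra hc
      push_neg at hc
      have hm : mu (T i j - 1) = 0 := hmu_zero _ (by omega)
      have hmem : (i, j) ∈ {p : ℕ × ℕ | p.2 < lam p.1 ∧ T p.1 p.2 = (T i j - 1) + 1} :=
        ⟨hj, show T i j = T i j - 1 + 1 by omega⟩
      have hpos' : 0 < entryCount lam T (T i j - 1) :=
        (Set.ncard_pos (hfin _)).mpr ⟨_, hmem⟩
      rw [hW (T i j - 1)] at hpos'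
      omega
    have hchain : ∀ d i j, j < lam (i+d) → T i j + d ≤ T (i+d) j := by
      intro d
      induction d with
      | zero => intro i j hj; simp
      | succ d ih =>
        intro i j hj
        have hj1 : j < lam (i+d+1) := by rwa [show i+(d+1) = i+d+1 by omega] at hj
        have hj' : j < lam (i+d) := lt_of_lt_of_le hj1 (hlam_anti (by omega))
        have h1' := ih i j hj'
        have h2' := hcol (i+d) (i+d+1) j (by omega) hj1
        rw [show i+(d+1) = i+d+1 by omega]
        omega
    have hfull : ∀ i j, i < l → j < lam (l-1) → T i j = i + 1 := by
      intro i j hi hjb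
      have hji : j < lam i := lt_of_lt_of_le hjb (hlam_anti (by omega))
      have hle := hlb i j hji
      have hch := hchain (l-1-i) i j (by rw [show i + (l-1-i) = l-1 by omega]; exact hjb)
      rw [show i + (l-1-i) = l-1 by omega] at hch
      have hub' := hub (l-1) j hjb
      omega
    have htwo : ∀ i j, i < l - 1 → j < lam i → T i j ≤ i + 2 := by
      intro i j hi hj
      by_cases hjb : j < lam (l-1)
      · rw [hfull i j (by omega) hjb]; omega
      · have hj2 : j < lam (l-2) := by
          rw [h1 (l-2) (by omega)]
          exact lt_of_lt_of_le hj (hlam_le_a i)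
        have hch := hchain (l-2-i) i j (by rw [show i + (l-2-i) = l-2 by omega]; exact hj2)
        rw [show i + (l-2-i) = l-2 by omega] at hch
        have := hub (l-2) j hj2
        omega
    set s : ℕ → ℕ := fun i => sInf {j | T i j ≠ i + 1} with hs_def
    have hs_mem : ∀ i, s i < lam i → T i (s i) ≠ i + 1 := by
      intro i _
      have hne : {j | T i j ≠ i + 1}.Nonempty :=
        ⟨lam i, by simp [hout i (lam i) (le_refl _)]⟩
      exact Nat.sInf_mem hne
    have hs_lt : ∀ i j, j < s i → T i j = i + 1 := by
      intro i j hj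
      by_contra h
      have h2' : s i ≤ j := Nat.sInf_le h
      omega
    have hs_le : ∀ i, s i ≤ lam i := by
      intro i
      exact Nat.sInf_le (show lam i ∈ {j | T i j ≠ i + 1} by
        simp [hout i (lam i) (le_refl _)])
    have hs_form : ∀ i j, j < lam i → T i j = if j < s i then i + 1 else i + 2 := by
      intro i j hj
      have hi_l : i < l := by
        by_contra h
        rw [hlam_zero i (by omega)] at hj; omega
      by_cases hc : j < s i
      · rw [if_pos hc]; exact hs_lt i j hc
      · rw [if_neg hc]
        have hsi_lt : s i < lam i := lt_of_le_of_lt (le_of_not_gt hc) hj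
        by_cases hil : i = l - 1
        · exfalso
          apply hs_mem i hsi_lt
          apply hfull i (s i) hi_l
          rw [← hil]; exact hsi_lt
        · have h1' : i + 1 ≤ T i (s i) := hlb i (s i) hsi_lt
          have h2' : T i (s i) ≤ i + 2 := htwo i (s i) (by omega) hsi_lt
          have h3' : T i (s i) = i + 2 := by have := hs_mem i hsi_lt; omega
          have h4' := hrow i (s i) j (le_of_not_gt hc) hj
          have h5' := htwo i j (by omega) hj
          omega
    have hsw0 : mu 0 = s 0 := by
      rw [← hW 0, count_zero lam T s hs_le hs_form]
    have hst : ∀ m, m < l → s m = t m := by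
      intro m
      induction m with
      | zero => intro _; omega
      | succ m ih =>
        intro hm
        have hihm := ih (by omega)
        have heq : mu (m+1) = s (m+1) + (lam m - s m) := by
          rw [← hW (m+1), count_succ lam T s m hs_le hs_form]
        have hrec := ht_rec m hm
        have hlm : lam m = lam 0 := h1 m (by omega)
        have hsl := hs_le (m+1)
        have hl1 := hlam_le_a (m+1)
        have := ht_le_a m
        omega
    funext i j
    by_cases hj : j < lam i
    · have hi_l : i < l := by
        by_contra h
        rw [hlam_zero i (by omega)] at hj; omega
      rw [hs_form i j hj, hT0form i j hj, hst i hi_l]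
    · rw [hout i j (le_of_not_gt hj)]
      simp only [T0, if_neg hj]
  -- conclusion
  exact Set.ncard_eq_one.mpr ⟨T0 lam mu, Set.eq_singleton_iff_unique_mem.mpr
    ⟨⟨hT0ssyt, hT0w⟩, fun T hT => huniq T hT.1 hT.2⟩⟩
end

section
/- Let λ and μ be partitions of n with ℓ(μ) = l. Then K_{λμ} = 1 if and only if there exist indices 0 = i_0 < i_1 < ... < i_t = l such that for each k = 1,...,t, the partitions λ^k = (λ_{i_{k-1}+1},...,λ_{i_k}) and μ^k = (μ_{i_{k-1}+1},...,μ_{i_k}) (with λ_i = 0 for i > ℓ(λ)) satisfy: (1) λ^k dominates μ^k, and (2) either λ_{i_{k-1}+1} = λ_{i_{k-1}+2} = ... = λ_{i_k - 1}, or λ_{i_{k-1}+1} > λ_{i_{k-1}+2} = λ_{i_{k-1}+3} = ... = λ_{i_k}. -/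
namespace BZ

def ps (α : ℕ → ℕ) (k : ℕ) : ℕ := ∑ i ∈ Finset.range k, α i

lemma ps_succ (α : ℕ → ℕ) (k : ℕ) : ps α (k+1) = ps α k + α k :=
  Finset.sum_range_succ α k

lemma ps_mono (α : ℕ → ℕ) : Monotone (ps α) := by
  intro a b hab
  exact Finset.sum_le_sum_of_subset (Finset.range_subset_range.2 hab)

lemma ps_le_of_le {α β : ℕ → ℕ} (k : ℕ) (h : ∀ i, i < k → α i ≤ β i) :
    ps α k ≤ ps β k :=
  Finset.sum_le_sum (fun i hi => h i (Finset.mem_range.1 hi))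

lemma ps_eq_of_eq {α β : ℕ → ℕ} (k : ℕ) (h : ∀ i, i < k → α i = β i) :
    ps α k = ps β k :=
  Finset.sum_congr rfl (fun i hi => h i (Finset.mem_range.1 hi))

/-- pointwise equality from sum equality plus pointwise ≤ -/
lemma eq_of_ps_eq {α β : ℕ → ℕ} {k : ℕ} (hle : ∀ i, i < k → α i ≤ β i)
    (hs : ps α k = ps β k) : ∀ i, i < k → α i = β i := by
  intro i hi
  by_contra hne
  have hlt : α i < β i := lt_of_le_of_ne (hle i hi) hne
  have : ps α k < ps β k := by
    apply Finset.sum_lt_sum (fun j hj => hle j (Finset.mem_range.1 hj))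
    exact ⟨i, Finset.mem_range.2 hi, hlt⟩
  omega

lemma lowerset_card_iff {n : ℕ} {P : ℕ → Prop} [DecidablePred P]
    (h : ∀ a b, a ≤ b → b < n → P b → P a) {j : ℕ} (hj : j < n) :
    j < ((Finset.range n).filter P).card ↔ P j := by
  constructor
  · intro hcard
    by_contra hP
    have hsub : (Finset.range n).filter P ⊆ Finset.range j := by
      intro x hx
      rw [Finset.mem_filter, Finset.mem_range] at hx
      rw [Finset.mem_range]
      by_contra hxj
      exact hP (h j x (by omega) hx.1 hx.2)
    have := Finset.card_le_card hsub
    simp at this; omega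
  · intro hP
    have hsub : Finset.range (j+1) ⊆ (Finset.range n).filter P := by
      intro x hx
      rw [Finset.mem_range] at hx
      rw [Finset.mem_filter, Finset.mem_range]
      exact ⟨by omega, h x j (by omega) hj hP⟩
    have := Finset.card_le_card hsub
    simp at this; omega

/-- number of cells in row `i` with entry `v` -/
def rc (α : ℕ → ℕ) (T : ℕ → ℕ → ℕ) (i v : ℕ) : ℕ :=
  ((Finset.range (α i)).filter (fun j => T i j = v)).card

lemma entry_set_eq (α : ℕ → ℕ) (T : ℕ → ℕ → ℕ) (m R : ℕ)
    (hR : ∀ i, R ≤ i → α i = 0) :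
    {p : ℕ × ℕ | p.2 < α p.1 ∧ T p.1 p.2 = m + 1} =
      ↑((Finset.range R).biUnion (fun i =>
        ((Finset.range (α i)).filter (fun j => T i j = m+1)).image (fun j => (i, j)))) := by
  ext ⟨i, j⟩
  simp only [Set.mem_setOf_eq, Finset.coe_biUnion, Set.mem_iUnion, Finset.mem_coe,
    Finset.mem_range, Finset.mem_image, Finset.mem_filter]
  constructor
  · rintro ⟨h1, h2⟩
    refine ⟨i, ?_, j, ⟨⟨h1, h2⟩, rfl⟩⟩
    by_contra hiR
    have := hR i (by omega)
    omega
  · rintro ⟨i', _, j', ⟨⟨hj1, hj2⟩, heq⟩⟩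
    cases heq
    exact ⟨hj1, hj2⟩

lemma entryCount_eq_sum (α : ℕ → ℕ) (T : ℕ → ℕ → ℕ) (m R : ℕ)
    (hR : ∀ i, R ≤ i → α i = 0) :
    entryCount α T m = ∑ i ∈ Finset.range R, rc α T i (m+1) := by
  rw [entryCount, entry_set_eq α T m R hR, Set.ncard_coe_finset]
  rw [Finset.card_biUnion]
  · apply Finset.sum_congr rfl
    intro i _
    rw [Finset.card_image_of_injective _ (fun a b hab => by
      simpa using congrArg Prod.snd hab)]
    rfl
  · intro x _ y _ hxy
    simp only [Finset.disjoint_left, Finset.mem_image]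
    rintro p ⟨j, _, rfl⟩ ⟨j', _, h'⟩
    exact hxy (congrArg Prod.fst h').symm

section Tab

variable {l : ℕ} {α μ : ℕ → ℕ} {T : ℕ → ℕ → ℕ}

lemma entry_ge (hα : Antitone α) (hT : IsSSYT α T) :
    ∀ i j, j < α i → i + 1 ≤ T i j := by
  intro i
  induction i with
  | zero => intro j hj; exact hT.1 0 j hj
  | succ i ih =>
    intro j hj
    have h1 : j < α i := lt_of_lt_of_le hj (hα (Nat.le_succ i))
    have := hT.2.2.2 i (i+1) j (Nat.lt_succ_self i) hj
    have := ih j h1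
    omega

lemma weight_sum (hW : HasWeight α T μ) (R : ℕ) (hR : ∀ i, R ≤ i → α i = 0) (m : ℕ) :
    ∑ i ∈ Finset.range R, rc α T i (m+1) = μ m := by
  rw [← entryCount_eq_sum α T m R hR]; exact hW m

lemma entry_le (hα0 : ∀ i, l ≤ i → α i = 0) (hW : HasWeight α T μ)
    (hμ0 : ∀ i, l ≤ i → μ i = 0) :
    ∀ i j, j < α i → T i j ≤ l := by
  intro i j hj
  by_contra hgt
  have hv : l + 1 ≤ T i j := by omega
  have hm : μ (T i j - 1) = 0 := hμ0 _ (by omega)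
  have hsum := weight_sum hW (max l (i+1)) (fun i' hi' => hα0 i' (by omega)) (T i j - 1)
  have hmem : j ∈ (Finset.range (α i)).filter (fun j' => T i j' = (T i j - 1) + 1) := by
    rw [Finset.mem_filter, Finset.mem_range]; exact ⟨hj, by omega⟩
  have hpos : 0 < rc α T i ((T i j - 1) + 1) := Finset.card_pos.2 ⟨j, hmem⟩
  have hmem2 : i ∈ Finset.range (max l (i+1)) := by rw [Finset.mem_range]; omega
  have : rc α T i ((T i j - 1)+1) ≤ ∑ i' ∈ Finset.range (max l (i+1)), rc α T i' ((T i j - 1)+1) :=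
    Finset.single_le_sum (f := fun i' => rc α T i' ((T i j - 1)+1)) (fun _ _ => Nat.zero_le _) hmem2
  omega

/-- number of entries `≤ k` in row `i` -/
def z (α : ℕ → ℕ) (T : ℕ → ℕ → ℕ) (k i : ℕ) : ℕ :=
  ((Finset.range (α i)).filter (fun j => T i j ≤ k)).card

lemma lt_z_iff (hT : IsSSYT α T) {k i j : ℕ} :
    j < z α T k i ↔ (j < α i ∧ T i j ≤ k) := by
  have hdc : ∀ a b, a ≤ b → b < α i → T i b ≤ k → T i a ≤ k := by
    intro a b hab hb h
    exact le_trans (hT.2.2.1 i a b hab hb) h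
  constructor
  · intro h
    have hja : j < α i := lt_of_lt_of_le h (le_trans (Finset.card_filter_le _ _) (le_of_eq (Finset.card_range _)))
    exact ⟨hja, (lowerset_card_iff hdc hja).1 h⟩
  · rintro ⟨h1, h2⟩
    exact (lowerset_card_iff hdc h1).2 h2

lemma z_le (α : ℕ → ℕ) (T : ℕ → ℕ → ℕ) (k i : ℕ) : z α T k i ≤ α i :=
  le_trans (Finset.card_filter_le _ _) (by simp)

lemma z_mono_k (α : ℕ → ℕ) (T : ℕ → ℕ → ℕ) {k k' : ℕ} (h : k ≤ k') (i : ℕ) :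
    z α T k i ≤ z α T k' i := by
  apply Finset.card_le_card
  intro x hx
  rw [Finset.mem_filter] at *
  exact ⟨hx.1, le_trans hx.2 h⟩

lemma z_ge_next (hα : Antitone α) (hT : IsSSYT α T) {k : ℕ}
    (hk : ∀ i' j', j' < α i' → T i' j' ≤ k + 1) (i : ℕ) :
    α (i+1) ≤ z α T k i := by
  by_contra h
  push_neg at h
  have hj : z α T k i < α i := lt_of_lt_of_le h (hα (Nat.le_succ i))
  have h2 := hT.2.2.2 i (i+1) (z α T k i) (Nat.lt_succ_self i) h
  have h3 := hk (i+1) (z α T k i) h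
  have h4 : ¬ (z α T k i < z α T k i) := lt_irrefl _
  rw [lt_z_iff hT] at h4
  push_neg at h4
  have := h4 hj
  omega

lemma z_zero_of_ge (hα : Antitone α) (hT : IsSSYT α T) {k i : ℕ} (h : k ≤ i) :
    z α T k i = 0 := by
  rw [z, Finset.card_eq_zero, Finset.filter_eq_empty_iff]
  intro j hj
  rw [Finset.mem_range] at hj
  have := entry_ge hα hT i j hj
  omega

lemma z_succ_k (α : ℕ → ℕ) (T : ℕ → ℕ → ℕ) (k i : ℕ) :
    z α T (k+1) i = z α T k i + rc α T i (k+1) := by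
  rw [z, z, rc, ← Finset.card_union_of_disjoint]
  · congr 1
    rw [← Finset.filter_or]
    apply Finset.filter_congr
    intro x _
    constructor
    · intro h; omega
    · intro h; omega
  · rw [Finset.disjoint_filter]
    intro x _ h1 h2
    omega

lemma z_sum (hW : HasWeight α T μ) (hT : IsSSYT α T) {R : ℕ}
    (hR : ∀ i, R ≤ i → α i = 0) (k : ℕ) :
    ∑ i ∈ Finset.range R, z α T k i = ps μ k := by
  induction k with
  | zero =>
    rw [ps]
    simp only [Finset.range_zero, Finset.sum_empty]
    apply Finset.sum_eq_zero
    intro i _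
    rw [z, Finset.card_eq_zero, Finset.filter_eq_empty_iff]
    intro j hj
    rw [Finset.mem_range] at hj
    have := hT.1 i j hj
    omega
  | succ k ih =>
    rw [ps_succ]
    calc ∑ i ∈ Finset.range R, z α T (k+1) i
        = ∑ i ∈ Finset.range R, (z α T k i + rc α T i (k+1)) := by
          apply Finset.sum_congr rfl; intro i _; exact z_succ_k α T k i
      _ = ps μ k + μ k := by
          rw [Finset.sum_add_distrib, ih, weight_sum hW R hR k]

lemma z_psum_eq (hα : Antitone α) (hα0 : ∀ i, l ≤ i → α i = 0)
    (hW : HasWeight α T μ) (hT : IsSSYT α T) (k : ℕ) :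
    ∑ i ∈ Finset.range k, z α T k i = ps μ k := by
  have h := z_sum hW hT (R := max l k) (fun i hi => hα0 i (by omega)) k
  rw [← h]
  apply Finset.sum_subset
  · apply Finset.range_subset_range.2; omega
  · intro i _ hi
    rw [Finset.mem_range] at hi
    exact z_zero_of_ge hα hT (by omega)

lemma dominance (hα : Antitone α) (hα0 : ∀ i, l ≤ i → α i = 0)
    (hW : HasWeight α T μ) (hT : IsSSYT α T) (k : ℕ) :
    ps μ k ≤ ps α k := by
  rw [← z_psum_eq hα hα0 hW hT k]
  exact ps_le_of_le k (fun i _ => z_le α T k i)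

lemma totals_eq (hα : Antitone α) (hα0 : ∀ i, l ≤ i → α i = 0)
    (hW : HasWeight α T μ) (hT : IsSSYT α T) (hμ0 : ∀ i, l ≤ i → μ i = 0) :
    ps μ l = ps α l := by
  have h := z_sum hW hT (R := l) hα0 l
  rw [← h]
  apply Finset.sum_congr rfl
  intro i hi
  rw [Finset.mem_range] at hi
  rw [z]
  have : (Finset.range (α i)).filter (fun j => T i j ≤ l) = Finset.range (α i) := by
    apply Finset.filter_true_of_mem
    intro j hj
    rw [Finset.mem_range] at hj
    exact entry_le hα0 hW hμ0 i j hj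
  rw [this, Finset.card_range]

lemma strip_dominance (hα : Antitone α) (hα0 : ∀ i, l ≤ i → α i = 0)
    (hW : HasWeight α T μ) (hT : IsSSYT α T) {k k' : ℕ} (hk : k ≤ k') :
    ps μ k ≤ ∑ i ∈ Finset.range k, z α T k' i := by
  rw [← z_psum_eq hα hα0 hW hT k]
  exact ps_le_of_le k (fun i _ => z_mono_k α T hk i)

end Tab

section Peel

variable {l : ℕ} {α μ Y : ℕ → ℕ} {T S : ℕ → ℕ → ℕ}

lemma nat_eq_of_lt_iff {a b : ℕ} (h : ∀ j, j < a ↔ j < b) : a = b := by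
  have h1 := h a
  have h2 := h b
  omega

lemma mk_ssyt (hα : Antitone α)
    (h1 : ∀ i j, j < α i → 1 ≤ T i j)
    (h2 : ∀ i j, α i ≤ j → T i j = 0)
    (h3 : ∀ i j k, j ≤ k → k < α i → T i j ≤ T i k)
    (h4 : ∀ i j, j < α (i+1) → T i j < T (i+1) j) :
    IsSSYT α T := by
  refine ⟨h1, h2, h3, ?_⟩
  intro i i' j hii' hj
  induction i' with
  | zero => omega
  | succ i' ih =>
    rcases Nat.lt_succ_iff_lt_or_eq.1 hii' with h | h
    · have hj' : j < α i' := lt_of_lt_of_le hj (hα (Nat.le_succ i'))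
      exact lt_trans (ih h hj') (h4 i' j hj)
    · subst h
      exact h4 i j hj

def tr (μ : ℕ → ℕ) (r : ℕ) : ℕ → ℕ := fun i => if i < r then μ i else 0

lemma tr_antitone (hm : Antitone μ) (r : ℕ) : Antitone (tr μ r) := by
  intro a b hab
  unfold tr
  by_cases hb : b < r
  · simp [hb, show a < r by omega]
    exact hm hab
  · simp [hb]

lemma tr_zero (μ : ℕ → ℕ) (r : ℕ) : ∀ i, r ≤ i → tr μ r i = 0 := by
  intro i hi; unfold tr; simp; omega

def res (Y : ℕ → ℕ) (T : ℕ → ℕ → ℕ) : ℕ → ℕ → ℕ :=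
  fun i j => if j < Y i then T i j else 0

def comp (α Y : ℕ → ℕ) (v : ℕ) (S : ℕ → ℕ → ℕ) : ℕ → ℕ → ℕ :=
  fun i j => if j < Y i then S i j else if j < α i then v else 0

section ZY

variable (hl : 1 ≤ l) (hα : Antitone α) (hα0 : ∀ i, l ≤ i → α i = 0)
  (hT : IsSSYT α T) (hW : HasWeight α T μ) (hμ0 : ∀ i, l ≤ i → μ i = 0)

include hl hα hα0 hT hW hμ0

lemma zY_lb : ∀ i, α (i+1) ≤ z α T (l-1) i := by
  intro i
  apply z_ge_next hα hT _ i
  intro i' j' hj'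
  have := entry_le hα0 hW hμ0 i' j' hj'
  omega

omit hl in
lemma zY_ub : ∀ i, z α T (l-1) i ≤ α i := fun i => z_le α T (l-1) i

omit hl hα0 hW hμ0 in
lemma zY_z0 : ∀ i, l - 1 ≤ i → z α T (l-1) i = 0 :=
  fun i hi => z_zero_of_ge hα hT hi

lemma zY_antitone : Antitone (z α T (l-1)) := by
  apply antitone_nat_of_succ_le
  intro i
  exact le_trans (zY_ub hα hα0 hT hW hμ0 (i+1)) (zY_lb hl hα hα0 hT hW hμ0 i)

omit hl hμ0 in
lemma zY_sum : ∑ i ∈ Finset.range l, z α T (l-1) i = ps μ (l-1) := by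
  have h := z_sum hW hT (R := l) hα0 (l-1)
  exact h

/-- the restriction is a tableau of shape `z α T (l-1)` with weight `tr μ (l-1)` -/
lemma res_is_tableau :
    IsSSYT (z α T (l-1)) (res (z α T (l-1)) T) ∧
      HasWeight (z α T (l-1)) (res (z α T (l-1)) T) (tr μ (l-1)) := by
  set Y := z α T (l-1) with hY
  have hYanti : Antitone Y := zY_antitone hl hα hα0 hT hW hμ0
  have hres : ∀ i j, j < Y i → res Y T i j = T i j := by
    intro i j hj; rw [res, if_pos hj]
  constructor
  · refine ⟨?_, ?_, ?_, ?_⟩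
    · intro i j hj
      rw [hres i j hj]
      exact hT.1 i j (lt_of_lt_of_le hj (zY_ub hα hα0 hT hW hμ0 i))
    · intro i j hj
      rw [res, if_neg (by omega)]
    · intro i j k hjk hk
      rw [hres i j (by omega), hres i k hk]
      exact hT.2.2.1 i j k hjk (lt_of_lt_of_le hk (zY_ub hα hα0 hT hW hμ0 i))
    · intro i i' j hii' hj
      rw [hres i' j hj, hres i j (lt_of_lt_of_le hj (hYanti (le_of_lt hii')))]
      exact hT.2.2.2 i i' j hii' (lt_of_lt_of_le hj (zY_ub hα hα0 hT hW hμ0 i'))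
  · intro m
    have hR : ∀ i, l ≤ i → Y i = 0 := fun i hi => zY_z0 hα hT i (by omega)
    rw [entryCount_eq_sum Y (res Y T) m l hR]
    by_cases hm : m < l - 1
    · have : ∀ i ∈ Finset.range l, rc Y (res Y T) i (m+1) = rc α T i (m+1) := by
        intro i _
        unfold rc
        congr 1
        ext j
        simp only [Finset.mem_filter, Finset.mem_range]
        constructor
        · rintro ⟨hj, hv⟩
          rw [hres i j hj] at hv
          exact ⟨lt_of_lt_of_le hj (zY_ub hα hα0 hT hW hμ0 i), hv⟩
        · rintro ⟨hj, hv⟩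
          have hjY : j < Y i := by
            rw [hY, lt_z_iff hT]
            exact ⟨hj, by omega⟩
          rw [hres i j hjY]
          exact ⟨hjY, hv⟩
      rw [Finset.sum_congr rfl this, weight_sum hW l hα0 m, tr, if_pos hm]
    · rw [tr, if_neg hm]
      apply Finset.sum_eq_zero
      intro i _
      rw [rc, Finset.card_eq_zero, Finset.filter_eq_empty_iff]
      intro j hj
      rw [Finset.mem_range] at hj
      have hjY : j < Y i := hj
      rw [hres i j hjY]
      rw [hY, lt_z_iff hT] at hjY
      omega

omit hl hα0 hW hμ0 in
lemma comp_res_eq (hα0 : ∀ i, l ≤ i → α i = 0) (hW : HasWeight α T μ)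
    (hμ0 : ∀ i, l ≤ i → μ i = 0) :
    comp α (z α T (l-1)) l (res (z α T (l-1)) T) = T := by
  set Y := z α T (l-1) with hY
  funext i j
  rw [comp, res]
  by_cases h1 : j < Y i
  · rw [if_pos h1, if_pos h1]
  · rw [if_neg h1]
    by_cases h2 : j < α i
    · rw [if_pos h2]
      have hle := entry_le hα0 hW hμ0 i j h2
      have : ¬ (j < α i ∧ T i j ≤ l - 1) := by
        rw [← lt_z_iff hT (k := l-1)]; exact h1
      push_neg at this
      have := this h2
      omega
    · rw [if_neg h2, hT.2.1 i j (by omega)]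

end ZY

section Comp

variable (hl : 1 ≤ l) (hα : Antitone α) (hα0 : ∀ i, l ≤ i → α i = 0)
  (hμ0 : ∀ i, l ≤ i → μ i = 0)
  (hlb : ∀ i, α (i+1) ≤ Y i) (hub : ∀ i, Y i ≤ α i) (hz0 : ∀ i, l - 1 ≤ i → Y i = 0)
  (hS : IsSSYT Y S) (hSW : HasWeight Y S (tr μ (l-1)))
  (hsumY : ∑ i ∈ Finset.range l, Y i = ps μ (l-1))
  (htot : ps μ l = ps α l)

include hlb hub in
lemma Y_antitone' : Antitone Y := by
  apply antitone_nat_of_succ_le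
  intro i
  exact le_trans (hub (i+1)) (hlb i)

include hl hα hα0 hμ0 hlb hub hz0 hS hSW in
lemma comp_is_ssyt : IsSSYT α (comp α Y l S) := by
  have hY0 : ∀ i, l ≤ i → Y i = 0 := fun i hi => hz0 i (by omega)
  have hSle : ∀ i j, j < Y i → S i j ≤ l - 1 := by
    intro i j hj
    exact entry_le (l := l-1) (fun i' hi' => hz0 i' hi') hSW (tr_zero μ (l-1)) i j hj
  have hYanti : Antitone Y := Y_antitone' hlb hub
  apply mk_ssyt hα
  · intro i j hj
    rw [comp]
    by_cases h1 : j < Y i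
    · rw [if_pos h1]; exact hS.1 i j h1
    · rw [if_neg h1, if_pos hj]; omega
  · intro i j hj
    rw [comp, if_neg (by have := hub i; omega), if_neg (by omega)]
  · intro i j k hjk hk
    rw [comp, comp]
    by_cases h1 : k < Y i
    · rw [if_pos h1, if_pos (by omega)]
      exact hS.2.2.1 i j k hjk h1
    · rw [if_neg h1, if_pos hk]
      by_cases h2 : j < Y i
      · rw [if_pos h2]
        have := hSle i j h2; omega
      · rw [if_neg h2, if_pos (by omega)]
  · intro i j hj
    have hjYi : j < Y i := lt_of_lt_of_le hj (hlb i)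
    rw [comp, comp, if_pos hjYi]
    by_cases h1 : j < Y (i+1)
    · rw [if_pos h1]
      exact hS.2.2.2 i (i+1) j (Nat.lt_succ_self i) h1
    · rw [if_neg h1, if_pos hj]
      have := hSle i j hjYi; omega

include hl hα hα0 hμ0 hlb hub hz0 hS hSW hsumY htot in
lemma comp_weight : HasWeight α (comp α Y l S) μ := by
  have hY0 : ∀ i, l ≤ i → Y i = 0 := fun i hi => hz0 i (by omega)
  have hSle : ∀ i j, j < Y i → S i j ≤ l - 1 := by
    intro i j hj
    exact entry_le (l := l-1) (fun i' hi' => hz0 i' hi') hSW (tr_zero μ (l-1)) i j hj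
  intro m
  rw [entryCount_eq_sum α (comp α Y l S) m l hα0]
  rcases lt_trichotomy (m+1) l with hm | hm | hm
  · -- small values: same as S
    have : ∀ i ∈ Finset.range l, rc α (comp α Y l S) i (m+1) = rc Y S i (m+1) := by
      intro i _
      unfold rc
      congr 1
      ext j
      simp only [Finset.mem_filter, Finset.mem_range]
      rw [comp]
      constructor
      · rintro ⟨hj, hv⟩
        by_cases h1 : j < Y i
        · rw [if_pos h1] at hv; exact ⟨h1, hv⟩
        · rw [if_neg h1, if_pos hj] at hv; omega
      · rintro ⟨hj, hv⟩
        refine ⟨lt_of_lt_of_le hj (hub i), ?_⟩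
        rw [if_pos hj]; exact hv
    rw [Finset.sum_congr rfl this]
    have := hSW m
    rw [entryCount_eq_sum Y S m l hY0] at this
    rw [this, tr, if_pos (by omega)]
  · -- value l : strip cells
    have : ∀ i ∈ Finset.range l, rc α (comp α Y l S) i (m+1) = α i - Y i := by
      intro i _
      rw [rc]
      have : (Finset.range (α i)).filter (fun j => comp α Y l S i j = m+1) =
          Finset.Ico (Y i) (α i) := by
        ext j
        simp only [Finset.mem_filter, Finset.mem_range, Finset.mem_Ico]
        rw [comp]
        constructor
        · rintro ⟨hj, hv⟩
          by_cases h1 : j < Y i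
          · rw [if_pos h1] at hv
            have := hSle i j h1
            omega
          · exact ⟨by omega, hj⟩
        · rintro ⟨hj1, hj2⟩
          rw [if_neg (by omega), if_pos hj2]
          omega
      rw [this, Nat.card_Ico]
    rw [Finset.sum_congr rfl this]
    have h1 : ∑ i ∈ Finset.range l, (α i - Y i) = ps α l - ∑ i ∈ Finset.range l, Y i := by
      rw [ps, ← Finset.sum_tsub_distrib]
      intro i _
      exact hub i
    rw [h1, hsumY, ← htot]
    have h2 : ps μ l = ps μ (l-1) + μ (l-1) := by
      conv_lhs => rw [show l = (l-1)+1 by omega]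
      exact ps_succ μ (l-1)
    have : m = l - 1 := by omega
    rw [this]
    omega
  · -- too big
    have hμm : μ m = 0 := hμ0 m (by omega)
    rw [hμm]
    apply Finset.sum_eq_zero
    intro i _
    rw [rc, Finset.card_eq_zero, Finset.filter_eq_empty_iff]
    intro j hj
    rw [Finset.mem_range] at hj
    rw [comp]
    by_cases h1 : j < Y i
    · rw [if_pos h1]
      have := hSle i j h1
      omega
    · rw [if_neg h1, if_pos hj]
      omega

include hl hα hα0 hμ0 hlb hub hz0 hS hSW in
lemma z_comp_eq : z α (comp α Y l S) (l-1) = Y := by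
  have hSle : ∀ i j, j < Y i → S i j ≤ l - 1 := by
    intro i j hj
    exact entry_le (l := l-1) (fun i' hi' => hz0 i' hi') hSW (tr_zero μ (l-1)) i j hj
  have hssyt := comp_is_ssyt hl hα hα0 hμ0 hlb hub hz0 hS hSW
  funext i
  apply nat_eq_of_lt_iff
  intro j
  rw [lt_z_iff hssyt]
  rw [comp]
  constructor
  · rintro ⟨hj, hv⟩
    by_cases h1 : j < Y i
    · exact h1
    · rw [if_neg h1, if_pos hj] at hv; omega
  · intro h1
    rw [if_pos h1]
    exact ⟨lt_of_lt_of_le h1 (hub i), hSle i j h1⟩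

include hS in
lemma res_comp_eq : res Y (comp α Y l S) = S := by
  funext i j
  rw [res, comp]
  by_cases h1 : j < Y i
  · rw [if_pos h1, if_pos h1]
  · rw [if_neg h1, hS.2.1 i j (by omega)]

end Comp

end Peel

section Exist

lemma ps_stable {f : ℕ → ℕ} {r k : ℕ} (h0 : ∀ i, r ≤ i → f i = 0) (hk : r ≤ k) :
    ps f k = ps f r := by
  rw [ps, ps]
  symm
  apply Finset.sum_subset (Finset.range_subset_range.2 hk)
  intro i _ hi
  rw [Finset.mem_range] at hi
  exact h0 i (by omega)

lemma ps_tr_eq (μ : ℕ → ℕ) (r k : ℕ) (hk : k ≤ r) : ps (tr μ r) k = ps μ k := by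
  apply ps_eq_of_eq
  intro i hi
  rw [tr, if_pos (by omega)]

def gstrip (l : ℕ) (α : ℕ → ℕ) (m : ℕ) : ℕ → ℕ :=
  fun i => if i < l - 1 then α i - ((m - α (i+1)) - (m - α i)) else 0

section GS

variable {l m : ℕ} {α μ : ℕ → ℕ} (hα : Antitone α) (hα0 : ∀ i, l ≤ i → α i = 0)

include hα in
lemma gstrip_ub : ∀ i, gstrip l α m i ≤ α i := by
  intro i
  simp only [gstrip]
  by_cases h : i < l - 1
  · rw [if_pos h]; omega
  · rw [if_neg h]; omega

include hα hα0 in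
lemma gstrip_lb : ∀ i, α (i+1) ≤ gstrip l α m i := by
  intro i
  simp only [gstrip]
  by_cases h : i < l - 1
  · rw [if_pos h]
    have : α (i+1) ≤ α i := hα (Nat.le_add_right i 1)
    omega
  · rw [if_neg h, hα0 (i+1) (by omega)]

lemma gstrip_z0 : ∀ i, l - 1 ≤ i → gstrip l α m i = 0 := by
  intro i hi
  simp only [gstrip]
  rw [if_neg (by omega)]

include hα in
lemma gstrip_psum (hm0 : m ≤ α 0) : ∀ k, k ≤ l - 1 →
    ps (gstrip l α m) k = ps α k - (m - α k) := by
  intro k hk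
  induction k with
  | zero => rw [ps, ps]; simp
  | succ k ih =>
    rw [ps_succ, ps_succ, ih (by omega)]
    simp only [gstrip]
    rw [if_pos (by omega)]
    have h1 : α (k+1) ≤ α k := hα (Nat.le_add_right k 1)
    have h2 : m - α k ≤ m - α (k+1) := by omega
    have h3 : (m - α (k+1)) - (m - α k) ≤ α k - α (k+1) := by omega
    have h4 : m - α 0 = 0 := by omega
    have h5 : α k ≤ α 0 := hα (Nat.zero_le k)
    have h7 : α 0 ≤ ps α k ∨ (ps α k = 0 ∧ α k = α 0) := by
      rcases Nat.eq_zero_or_pos k with h | h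
      · right; subst h; constructor
        · rw [ps]; simp
        · rfl
      · left
        have : ps α 1 ≤ ps α k := ps_mono α h
        have h8 : ps α 1 = α 0 := by rw [ps]; simp
        omega
    rcases h7 with h7 | h7 <;> omega

end GS

lemma exists_tableau : ∀ (l : ℕ) (α μ : ℕ → ℕ), Antitone α → (∀ i, l ≤ i → α i = 0) →
    Antitone μ → (∀ i, l ≤ i → μ i = 0) → (∀ k, ps μ k ≤ ps α k) → (ps μ l = ps α l) →
    ∃ T, IsSSYT α T ∧ HasWeight α T μ := by
  intro l
  induction l with
  | zero =>
    intro α μ hα hα0 hμ hμ0 hdom htot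
    refine ⟨fun _ _ => 0, ⟨?_, ?_, ?_, ?_⟩, ?_⟩
    · intro i j hj; rw [hα0 i (by omega)] at hj; omega
    · intro i j hj; rfl
    · intro i j k hjk hk; exact le_refl 0
    · intro i i' j hii' hj; rw [hα0 i' (by omega)] at hj; omega
    · intro mm
      rw [entryCount_eq_sum α _ mm 0 hα0]
      simp only [Finset.range_zero, Finset.sum_empty]
      rw [hμ0 mm (by omega)]
  | succ l ih =>
    intro α μ hα hα0 hμ hμ0 hdom htot
    set m := μ l with hm
    set g := gstrip (l+1) α m with hg
    have hsl : l + 1 - 1 = l := by omega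
    have hm0 : m ≤ α 0 := by
      have h1 := hdom 1
      have h2 : μ l ≤ μ 0 := hμ (Nat.zero_le l)
      have h3 : ps μ 1 = μ 0 := by rw [ps]; simp
      have h4 : ps α 1 = α 0 := by rw [ps]; simp
      omega
    have hgub : ∀ i, g i ≤ α i := gstrip_ub hα
    have hglb : ∀ i, α (i+1) ≤ g i := gstrip_lb hα hα0
    have hgz0 : ∀ i, l ≤ i → g i = 0 := by
      intro i hi; rw [hg]; exact gstrip_z0 i (by omega)
    have hganti : Antitone g := by
      apply antitone_nat_of_succ_le
      intro i
      exact le_trans (hgub (i+1)) (hglb i)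
    have hpsum : ∀ k, k ≤ l → ps g k = ps α k - (m - α k) := by
      intro k hk
      rw [hg]
      exact gstrip_psum hα hm0 k (by omega)
    have halm : α l ≤ m := by
      have h1 := hdom l
      have h2 : ps μ (l+1) = ps μ l + m := ps_succ μ l
      have h3 : ps α (l+1) = ps α l + α l := ps_succ α l
      omega
    have hgsum : ps g l = ps μ l := by
      rw [hpsum l (le_refl l)]
      have h2 : ps μ (l+1) = ps μ l + m := ps_succ μ l
      have h3 : ps α (l+1) = ps α l + α l := ps_succ α l
      have := hdom l
      omega
    have hgdom : ∀ k, ps (tr μ l) k ≤ ps g k := by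
      intro k
      by_cases hk : k ≤ l
      · rw [ps_tr_eq μ l k hk, hpsum k hk]
        have h1 := hdom k
        have h2 := hdom (k+1)
        have h3 : ps μ (k+1) = ps μ k + μ k := ps_succ μ k
        have h4 : ps α (k+1) = ps α k + α k := ps_succ α k
        have h5 : m ≤ μ k := hμ (by omega)
        omega
      · rw [ps_stable (tr_zero μ l) (by omega), ps_stable hgz0 (by omega),
          ps_tr_eq μ l l (le_refl l), hgsum]
    have hgtot : ps (tr μ l) l = ps g l := by
      rw [ps_tr_eq μ l l (le_refl l), hgsum]
    obtain ⟨S, hS, hSW⟩ := ih g (tr μ l) hganti hgz0 (tr_antitone hμ l) (tr_zero μ l)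
      hgdom hgtot
    refine ⟨comp α g (l+1) S, ?_, ?_⟩
    · apply comp_is_ssyt (by omega) hα hα0 hμ0 hglb hgub
        (by rw [hsl]; exact fun i hi => hgz0 i hi) _ _
      · exact hS
      · rw [hsl]; exact hSW
    · apply comp_weight (by omega) hα hα0 hμ0 hglb hgub
        (by rw [hsl]; exact fun i hi => hgz0 i hi) _ _ _ _
      · exact hS
      · rw [hsl]; exact hSW
      · rw [hsl, Finset.sum_range_succ, hgz0 l (le_refl l)]
        have hh : (∑ i ∈ Finset.range l, g i) = ps g l := rfl
        omega
      · exact htot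

end Exist

section Strips

/-- A dominant horizontal strip datum: `Y` is the shape left after removing the
top value `l` from `α`. -/
structure DStrip (l : ℕ) (α μ Y : ℕ → ℕ) : Prop where
  lb : ∀ i, α (i+1) ≤ Y i
  ub : ∀ i, Y i ≤ α i
  z0 : ∀ i, l - 1 ≤ i → Y i = 0
  tot : ∑ i ∈ Finset.range l, Y i = ps μ (l-1)
  dom : ∀ k, k ≤ l - 1 → ps μ k ≤ ps Y k

variable {l : ℕ} {α μ Y : ℕ → ℕ} {T S : ℕ → ℕ → ℕ}

lemma dstrip_antitone (D : DStrip l α μ Y) : Antitone Y :=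
  antitone_nat_of_succ_le (fun i => le_trans (D.ub (i+1)) (D.lb i))

lemma dstrip_ps_tot (hl : 1 ≤ l) (D : DStrip l α μ Y) : ps Y (l-1) = ps μ (l-1) := by
  have h1 : ps Y l = ps Y (l-1) + Y (l-1) := by
    conv_lhs => rw [show l = (l-1)+1 by omega]
    exact ps_succ Y (l-1)
  have h2 : Y (l-1) = 0 := D.z0 (l-1) (le_refl _)
  have h3 : (∑ i ∈ Finset.range l, Y i) = ps Y l := rfl
  have := D.tot
  omega

/-- The strip of any tableau is a dominant strip. -/
lemma dstrip_of_tableau (hl : 1 ≤ l) (hα : Antitone α) (hα0 : ∀ i, l ≤ i → α i = 0)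
    (hμ0 : ∀ i, l ≤ i → μ i = 0) (hT : IsSSYT α T) (hW : HasWeight α T μ) :
    DStrip l α μ (z α T (l-1)) := by
  refine ⟨zY_lb hl hα hα0 hT hW hμ0, zY_ub hα hα0 hT hW hμ0,
    zY_z0 hα hT, zY_sum hα hα0 hT hW, ?_⟩
  intro k hk
  exact strip_dominance hα hα0 hW hT hk

lemma dstrip_exists_tableau (hl : 1 ≤ l) (hα : Antitone α) (hμ : Antitone μ)
    (D : DStrip l α μ Y) :
    ∃ S, IsSSYT Y S ∧ HasWeight Y S (tr μ (l-1)) := by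
  apply exists_tableau (l-1) Y (tr μ (l-1)) (dstrip_antitone D) (D.z0)
    (tr_antitone hμ (l-1)) (tr_zero μ (l-1))
  · intro k
    by_cases hk : k ≤ l - 1
    · rw [ps_tr_eq μ (l-1) k hk]
      exact D.dom k hk
    · rw [ps_stable (tr_zero μ (l-1)) (by omega), ps_stable D.z0 (by omega),
        ps_tr_eq μ (l-1) (l-1) (le_refl _), dstrip_ps_tot hl D]
  · rw [ps_tr_eq μ (l-1) (l-1) (le_refl _), dstrip_ps_tot hl D]

/-- composing a dominant strip with a tableau of the peeled pair -/
lemma dstrip_comp_mem (hl : 1 ≤ l) (hα : Antitone α) (hα0 : ∀ i, l ≤ i → α i = 0)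
    (hμ0 : ∀ i, l ≤ i → μ i = 0) (htot : ps μ l = ps α l)
    (D : DStrip l α μ Y) (hS : IsSSYT Y S) (hSW : HasWeight Y S (tr μ (l-1))) :
    IsSSYT α (comp α Y l S) ∧ HasWeight α (comp α Y l S) μ ∧
      z α (comp α Y l S) (l-1) = Y := by
  refine ⟨comp_is_ssyt hl hα hα0 hμ0 D.lb D.ub D.z0 hS hSW,
    comp_weight hl hα hα0 hμ0 D.lb D.ub D.z0 hS hSW D.tot htot,
    z_comp_eq hl hα hα0 hμ0 D.lb D.ub D.z0 hS hSW⟩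

lemma kostka_one_iff : kostka α μ = 1 ↔
    ∃ T, {T' | IsSSYT α T' ∧ HasWeight α T' μ} = {T} := Set.ncard_eq_one

/-- Under `kostka = 1`, all dominant strips coincide. -/
lemma dstrips_eq (hl : 1 ≤ l) (hα : Antitone α) (hα0 : ∀ i, l ≤ i → α i = 0)
    (hμ : Antitone μ) (hμ0 : ∀ i, l ≤ i → μ i = 0) (htot : ps μ l = ps α l)
    (hK : kostka α μ = 1) {Y1 Y2 : ℕ → ℕ}
    (D1 : DStrip l α μ Y1) (D2 : DStrip l α μ Y2) : Y1 = Y2 := by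
  obtain ⟨T0, hT0⟩ := kostka_one_iff.1 hK
  obtain ⟨S1, hS1, hSW1⟩ := dstrip_exists_tableau hl hα hμ D1
  obtain ⟨S2, hS2, hSW2⟩ := dstrip_exists_tableau hl hα hμ D2
  obtain ⟨h1a, h1b, h1c⟩ := dstrip_comp_mem hl hα hα0 hμ0 htot D1 hS1 hSW1
  obtain ⟨h2a, h2b, h2c⟩ := dstrip_comp_mem hl hα hα0 hμ0 htot D2 hS2 hSW2
  have m1 : comp α Y1 l S1 ∈ {T' | IsSSYT α T' ∧ HasWeight α T' μ} := ⟨h1a, h1b⟩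
  have m2 : comp α Y2 l S2 ∈ {T' | IsSSYT α T' ∧ HasWeight α T' μ} := ⟨h2a, h2b⟩
  rw [hT0] at m1 m2
  rw [← h1c, ← h2c, Set.mem_singleton_iff.1 m1, Set.mem_singleton_iff.1 m2]

/-- peeling preserves `kostka = 1`. -/
lemma kostka_peel (hl : 1 ≤ l) (hα : Antitone α) (hα0 : ∀ i, l ≤ i → α i = 0)
    (hμ0 : ∀ i, l ≤ i → μ i = 0) (hT0 : IsSSYT α T) (hW0 : HasWeight α T μ)
    (hsing : {T' | IsSSYT α T' ∧ HasWeight α T' μ} = {T}) :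
    kostka (z α T (l-1)) (tr μ (l-1)) = 1 := by
  set Y := z α T (l-1) with hY
  have htot : ps μ l = ps α l := totals_eq hα hα0 hW0 hT0 hμ0
  have D : DStrip l α μ Y := dstrip_of_tableau hl hα hα0 hμ0 hT0 hW0
  rw [kostka_one_iff]
  refine ⟨res Y T, ?_⟩
  ext S
  simp only [Set.mem_setOf_eq, Set.mem_singleton_iff]
  constructor
  · rintro ⟨hS, hSW⟩
    obtain ⟨ha, hb, hc⟩ := dstrip_comp_mem hl hα hα0 hμ0 htot D hS hSW
    have : comp α Y l S ∈ {T' | IsSSYT α T' ∧ HasWeight α T' μ} := ⟨ha, hb⟩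
    rw [hsing, Set.mem_singleton_iff] at this
    rw [← this, res_comp_eq hS]
  · rintro rfl
    exact res_is_tableau hl hα hα0 hT0 hW0 hμ0

/-- a tableau is recovered from its strip and restriction -/
lemma tableau_eq_comp (hl : 1 ≤ l) (hα : Antitone α) (hα0 : ∀ i, l ≤ i → α i = 0)
    (hμ0 : ∀ i, l ≤ i → μ i = 0) (hT : IsSSYT α T) (hW : HasWeight α T μ) :
    T = comp α (z α T (l-1)) l (res (z α T (l-1)) T) :=
  (comp_res_eq hα hT hα0 hW hμ0).symm

end Strips

section Moves

variable {l : ℕ} {α μ Y : ℕ → ℕ}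

lemma const_of_adj {α : ℕ → ℕ} {a b : ℕ} (h : ∀ u, a ≤ u → u < b → α u = α (u+1)) :
    ∀ u v, a ≤ u → u ≤ v → v ≤ b → α u = α v := by
  intro u v hu huv hv
  induction v with
  | zero =>
    have : u = 0 := by omega
    subst this; rfl
  | succ v ih =>
    by_cases hc : u = v + 1
    · rw [hc]
    · rw [ih (by omega) (by omega), h v (by omega) (by omega)]

lemma ps_add_Ico {x : ℕ → ℕ} {a b : ℕ} (hab : a ≤ b) :
    ps x a + ∑ i ∈ Finset.Ico a b, x i = ps x b := by
  simp only [ps, Finset.range_eq_Ico]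
  exact Finset.sum_Ico_consecutive x (Nat.zero_le a) hab

lemma tele_sum (hα : Antitone α) : ∀ a b, a ≤ b →
    ∑ i ∈ Finset.Ico a b, (α i - α (i+1)) = α a - α b := by
  intro a b hab
  induction b with
  | zero =>
    have : a = 0 := by omega
    subst this; simp
  | succ b ih =>
    by_cases hc : a = b + 1
    · subst hc; simp
    · have hab' : a ≤ b := by omega
      rw [Finset.sum_Ico_succ_top hab', ih hab']
      have h1 : α b ≤ α a := hα hab'
      have h2 : α (b+1) ≤ α b := hα (Nat.le_add_right b 1)
      omega

lemma move_dstrip (D : DStrip l α μ Y) {w u : ℕ} (hwu : w ≠ u)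
    (hw : Y w < α w) (hu : α (u+1) < Y u) (hwl : w ≤ l - 2) (hul : u ≤ l - 2)
    (hl2 : 2 ≤ l) (hkey : ∀ k, u < k → k ≤ w → ps μ k < ps Y k) :
    DStrip l α μ (Function.update (Function.update Y w (Y w + 1)) u (Y u - 1)) ∧
      Function.update (Function.update Y w (Y w + 1)) u (Y u - 1) ≠ Y := by
  set Y2 := Function.update (Function.update Y w (Y w + 1)) u (Y u - 1) with hY2def
  have hY2 : ∀ i, Y2 i = if i = u then Y u - 1 else if i = w then Y w + 1 else Y i := by
    intro i
    rw [hY2def, Function.update_apply, Function.update_apply]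
  have hYu1 : 1 ≤ Y u := by omega
  have hps : ∀ k, ps Y2 k + (if u < k then 1 else 0) = ps Y k + (if w < k then 1 else 0) := by
    intro k
    induction k with
    | zero => simp [ps]
    | succ k ih =>
      rw [ps_succ, ps_succ, hY2 k]
      by_cases h1 : k = u
      · subst h1
        rw [if_pos rfl]
        split_ifs at ih ⊢ <;> omega
      · rw [if_neg h1]
        by_cases h2 : k = w
        · subst h2
          rw [if_pos rfl]
          split_ifs at ih ⊢ <;> omega
        · rw [if_neg h2]
          split_ifs at ih ⊢ <;> omega
  have hanti := dstrip_antitone D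
  refine ⟨⟨?_, ?_, ?_, ?_, ?_⟩, ?_⟩
  · intro i
    rw [hY2 i]
    split_ifs with h1 h2
    · rw [h1]; omega
    · rw [h2]
      have := D.lb w; omega
    · exact D.lb i
  · intro i
    rw [hY2 i]
    split_ifs with h1 h2
    · rw [h1]
      have := D.ub u; omega
    · rw [h2]; omega
    · exact D.ub i
  · intro i hi
    rw [hY2 i]
    split_ifs with h1 h2
    · omega
    · omega
    · exact D.z0 i hi
  · have h := hps l
    have h1 : u < l := by omega
    have h2 : w < l := by omega
    rw [if_pos h1, if_pos h2] at h
    have e1 : (∑ i ∈ Finset.range l, Y2 i) = ps Y2 l := rfl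
    have e2 : (∑ i ∈ Finset.range l, Y i) = ps Y l := rfl
    have := D.tot
    omega
  · intro k hk
    have h := hps k
    have hd := D.dom k hk
    by_cases h1 : u < k
    · by_cases h2 : w < k
      · rw [if_pos h1, if_pos h2] at h; omega
      · rw [if_pos h1, if_neg h2] at h
        have := hkey k h1 (by omega)
        omega
    · rw [if_neg h1] at h
      split_ifs at h <;> omega
  · intro hcontra
    have := congrFun hcontra u
    rw [hY2 u, if_pos rfl] at this
    omega

lemma move_contra (hl2 : 2 ≤ l) (hα : Antitone α) (hα0 : ∀ i, l ≤ i → α i = 0)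
    (hμ : Antitone μ) (hμ0 : ∀ i, l ≤ i → μ i = 0) (htot : ps μ l = ps α l)
    (hK : kostka α μ = 1) (D : DStrip l α μ Y) {w u : ℕ} (hwu : w ≠ u)
    (hw : Y w < α w) (hu : α (u+1) < Y u) (hwl : w ≤ l - 2) (hul : u ≤ l - 2)
    (hkey : ∀ k, u < k → k ≤ w → ps μ k < ps Y k) : False := by
  obtain ⟨D2, hne⟩ := move_dstrip D hwu hw hu hwl hul hl2 hkey
  exact hne (dstrips_eq (by omega) hα hα0 hμ hμ0 htot hK D2 D)

end Moves

section Forced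

variable {l p : ℕ} {α μ Y1 Y2 : ℕ → ℕ}

lemma strips_eq_of_agree {i0 : ℕ} (hi0 : i0 < l)
    (h1 : ∀ j, l ≤ j → Y1 j = 0) (h2 : ∀ j, l ≤ j → Y2 j = 0)
    (hagree : ∀ j, j < l → j ≠ i0 → Y1 j = Y2 j)
    (hsum : ∑ i ∈ Finset.range l, Y1 i = ∑ i ∈ Finset.range l, Y2 i) : Y1 = Y2 := by
  have hmem : i0 ∈ Finset.range l := Finset.mem_range.2 hi0
  have e1 := (Finset.add_sum_erase _ Y1 hmem).symm
  have e2 := (Finset.add_sum_erase _ Y2 hmem).symm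
  have he : ∑ i ∈ (Finset.range l).erase i0, Y1 i
      = ∑ i ∈ (Finset.range l).erase i0, Y2 i := by
    apply Finset.sum_congr rfl
    intro j hj
    rw [Finset.mem_erase, Finset.mem_range] at hj
    exact hagree j hj.2 hj.1
  funext j
  by_cases hjl : j < l
  · by_cases hj0 : j = i0
    · subst hj0
      omega
    · exact hagree j hjl hj0
  · rw [h1 j (by omega), h2 j (by omega)]

lemma dstrip_below (D : DStrip l α μ Y1) (hp : p ≤ l - 1) (hbp : ps μ p = ps α p)
    (hub : ∀ i, Y1 i ≤ α i) : ∀ i, i < p → Y1 i = α i := by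
  intro i hi
  have hd := D.dom p hp
  have hub' : ps Y1 p ≤ ps α p := ps_le_of_le p (fun i _ => hub i)
  have : ps Y1 p = ps α p := by omega
  exact eq_of_ps_eq (fun i _ => hub i) this i hi

lemma strip_forced (hl : 1 ≤ l) (hp : p < l) (hbp : ps μ p = ps α p)
    (hgood : (∀ a b, p ≤ a → a ≤ b → b + 1 < l → α a = α b) ∨
      (α (p + 1) < α p ∧ ∀ a b, p + 1 ≤ a → a ≤ b → b < l → α a = α b))
    (D1 : DStrip l α μ Y1) (D2 : DStrip l α μ Y2) : Y1 = Y2 := by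
  have below1 := dstrip_below D1 (by omega) hbp D1.ub
  have below2 := dstrip_below D2 (by omega) hbp D2.ub
  have squeeze : ∀ (Y : ℕ → ℕ), DStrip l α μ Y → ∀ i, α (i+1) = α i → Y i = α i := by
    intro Y D i hc
    have h1 := D.lb i; have h2 := D.ub i; omega
  have hz1 : ∀ j, l ≤ j → Y1 j = 0 := fun j hj => D1.z0 j (by omega)
  have hz2 : ∀ j, l ≤ j → Y2 j = 0 := fun j hj => D2.z0 j (by omega)
  have hsum : ∑ i ∈ Finset.range l, Y1 i = ∑ i ∈ Finset.range l, Y2 i := by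
    rw [D1.tot, D2.tot]
  rcases hgood with hg | hg
  · apply strips_eq_of_agree (i0 := l-2) (by omega) hz1 hz2 ?_ hsum
    intro j hjl hj0
    by_cases hjp : j < p
    · rw [below1 j hjp, below2 j hjp]
    · by_cases hjl1 : l - 1 ≤ j
      · rw [D1.z0 j hjl1, D2.z0 j hjl1]
      · have hc : α (j+1) = α j := (hg j (j+1) (by omega) (by omega) (by omega)).symm
        rw [squeeze Y1 D1 j hc, squeeze Y2 D2 j hc]
  · apply strips_eq_of_agree (i0 := p) hp hz1 hz2 ?_ hsum
    intro j hjl hj0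
    by_cases hjp : j < p
    · rw [below1 j hjp, below2 j hjp]
    · by_cases hjl1 : l - 1 ≤ j
      · rw [D1.z0 j hjl1, D2.z0 j hjl1]
      · have hc : α (j+1) = α j := (hg.2 j (j+1) (by omega) (by omega) (by omega)).symm
        rw [squeeze Y1 D1 j hc, squeeze Y2 D2 j hc]

end Forced

section LemA

def GoodDecomp (l : ℕ) (α μ : ℕ → ℕ) : Prop :=
  ∃ (t : ℕ) (f : ℕ → ℕ), f 0 = 0 ∧ f t = l ∧ (∀ k, k < t → f k < f (k + 1)) ∧
    ∀ k, k < t →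
      ((∑ i ∈ Finset.Ico (f k) (f (k + 1)), α i
          = ∑ i ∈ Finset.Ico (f k) (f (k + 1)), μ i) ∧
       (∀ m, f k ≤ m → m ≤ f (k + 1) →
          ∑ i ∈ Finset.Ico (f k) m, μ i ≤ ∑ i ∈ Finset.Ico (f k) m, α i)) ∧
      ((∀ a b, f k ≤ a → a ≤ b → b + 1 < f (k + 1) → α a = α b) ∨
       (α (f k + 1) < α (f k) ∧ ∀ a b, f k + 1 ≤ a → a ≤ b → b < f (k + 1) → α a = α b))

variable {l t : ℕ} {α μ : ℕ → ℕ} {f : ℕ → ℕ}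

lemma fmono (hfmono : ∀ k, k < t → f k < f (k + 1)) :
    ∀ j k, j ≤ k → k ≤ t → f j ≤ f k := by
  intro j k hjk hkt
  induction k with
  | zero =>
    obtain rfl : j = 0 := by omega
    exact le_refl _
  | succ k ih =>
    by_cases hc : j = k + 1
    · rw [hc]
    · have h1 := ih (by omega) (by omega)
      have h2 := hfmono k (by omega)
      omega

lemma decomp_bp (hf0 : f 0 = 0)
    (hfmono : ∀ k, k < t → f k < f (k + 1))
    (hblocks : ∀ k, k < t →
      ∑ i ∈ Finset.Ico (f k) (f (k + 1)), α i = ∑ i ∈ Finset.Ico (f k) (f (k + 1)), μ i) :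
    ∀ k, k ≤ t → ps μ (f k) = ps α (f k) := by
  intro k hkt
  induction k with
  | zero => rw [hf0]; rfl
  | succ k ih =>
    have h1 : f k ≤ f (k+1) := le_of_lt (hfmono k (by omega))
    have e1 := ps_add_Ico (x := μ) h1
    have e2 := ps_add_Ico (x := α) h1
    have e3 := hblocks k (by omega)
    have e4 := ih (by omega)
    omega

lemma decomp_dom (hf0 : f 0 = 0) (hft : f t = l)
    (hfmono : ∀ k, k < t → f k < f (k + 1))
    (hblocks : ∀ k, k < t →
      (∑ i ∈ Finset.Ico (f k) (f (k + 1)), α i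
          = ∑ i ∈ Finset.Ico (f k) (f (k + 1)), μ i) ∧
       (∀ m, f k ≤ m → m ≤ f (k + 1) →
          ∑ i ∈ Finset.Ico (f k) m, μ i ≤ ∑ i ∈ Finset.Ico (f k) m, α i)) :
    ∀ m, m ≤ l → ps μ m ≤ ps α m := by
  have key : ∀ k, k ≤ t → ∀ m, m ≤ f k → ps μ m ≤ ps α m := by
    intro k
    induction k with
    | zero =>
      intro _ m hm
      rw [hf0] at hm
      obtain rfl : m = 0 := by omega
      exact le_refl _
    | succ k ih =>
      intro hkt m hm
      by_cases hc : m ≤ f k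
      · exact ih (by omega) m hc
      · have h1 : f k ≤ m := by omega
        have e1 := ps_add_Ico (x := μ) h1
        have e2 := ps_add_Ico (x := α) h1
        have e3 := (hblocks k (by omega)).2 m h1 hm
        have e4 := decomp_bp hf0 hfmono (fun k' hk' => (hblocks k' hk').1) k (by omega)
        omega
  intro m hm
  exact key t (le_refl t) m (by omega)

lemma kostka_of_zero (hα0 : ∀ i, α i = 0) (hμ0 : ∀ i, μ i = 0) :
    kostka α μ = 1 := by
  rw [kostka]
  have : {T : ℕ → ℕ → ℕ | IsSSYT α T ∧ HasWeight α T μ} = {fun _ _ => 0} := by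
    ext T
    simp only [Set.mem_setOf_eq, Set.mem_singleton_iff]
    constructor
    · rintro ⟨hT, _⟩
      funext i j
      exact hT.2.1 i j (by rw [hα0 i]; omega)
    · rintro rfl
      refine ⟨⟨?_, ?_, ?_, ?_⟩, ?_⟩
      · intro i j hj; rw [hα0 i] at hj; omega
      · intro i j _; rfl
      · intro i j k _ _; exact le_refl 0
      · intro i i' j _ hj; rw [hα0 i'] at hj; omega
      · intro m
        rw [entryCount_eq_sum α _ m 0 (fun i _ => hα0 i)]
        simp only [Finset.range_zero, Finset.sum_empty]
        rw [hμ0 m]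
  rw [this, Set.ncard_singleton]

lemma lemA : ∀ l, ∀ α μ : ℕ → ℕ, Antitone α → (∀ i, l ≤ i → α i = 0) →
    Antitone μ → (∀ i, l ≤ i → μ i = 0) → GoodDecomp l α μ → kostka α μ = 1 := by
  intro l
  induction l using Nat.strong_induction_on with
  | _ l ihl =>
  intro α μ hα hα0 hμ hμ0 hGD
  rcases Nat.eq_zero_or_pos l with hl0 | hl1
  · subst hl0
    exact kostka_of_zero (fun i => hα0 i (Nat.zero_le i)) (fun i => hμ0 i (Nat.zero_le i))
  obtain ⟨t, f, hf0, hft, hfm, hblocks⟩ := hGD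
  have ht1 : 1 ≤ t := by
    by_contra h
    have : t = 0 := by omega
    subst this
    omega
  set p := f (t-1) with hpdef
  have htt : t - 1 + 1 = t := by omega
  have hpl : p < l := by
    have := hfm (t-1) (by omega)
    rw [htt, hft] at this
    exact this
  have hble := hblocks (t-1) (by omega)
  rw [htt, hft] at hble
  have hbpp : ps μ p = ps α p :=
    decomp_bp hf0 hfm (fun k hk => (hblocks k hk).1.1) (t-1) (by omega)
  have htotl : ps μ l = ps α l := by
    have := decomp_bp hf0 hfm (fun k hk => (hblocks k hk).1.1) t (le_refl t)
    rw [hft] at this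
    exact this
  have hdoml : ∀ m, m ≤ l → ps μ m ≤ ps α m :=
    decomp_dom hf0 hft hfm (fun k hk => (hblocks k hk).1)
  have hdom : ∀ m, ps μ m ≤ ps α m := by
    intro m
    by_cases hm : m ≤ l
    · exact hdoml m hm
    · rw [ps_stable hμ0 (by omega), ps_stable hα0 (by omega)]
      exact le_of_eq htotl
  obtain ⟨Tex, hTex, hTexW⟩ := exists_tableau l α μ hα hα0 hμ hμ0 hdom htotl
  set Y := z α Tex (l-1) with hYdef
  have D0 : DStrip l α μ Y := dstrip_of_tableau hl1 hα hα0 hμ0 hTex hTexW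
  have huniqY : ∀ Y', DStrip l α μ Y' → Y' = Y :=
    fun Y' D' => strip_forced hl1 hpl hbpp hble.2 D' D0
  have hYanti : Antitone Y := dstrip_antitone D0
  have hbelow : ∀ i, i < p → Y i = α i := dstrip_below D0 (by omega) hbpp D0.ub
  have hYz0 : ∀ i, l - 1 ≤ i → Y i = 0 := D0.z0
  have hpsYp : ps Y p = ps μ p := by
    rw [ps_eq_of_eq p hbelow, hbpp]
  -- transfer of a block `k < t-1` to the peeled pair
  have htransfer : ∀ k, k < t - 1 →
      ((∑ i ∈ Finset.Ico (f k) (f (k + 1)), Y i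
          = ∑ i ∈ Finset.Ico (f k) (f (k + 1)), tr μ (l-1) i) ∧
       (∀ m, f k ≤ m → m ≤ f (k + 1) →
          ∑ i ∈ Finset.Ico (f k) m, tr μ (l-1) i ≤ ∑ i ∈ Finset.Ico (f k) m, Y i)) ∧
      ((∀ a b, f k ≤ a → a ≤ b → b + 1 < f (k + 1) → Y a = Y b) ∨
       (Y (f k + 1) < Y (f k) ∧
        ∀ a b, f k + 1 ≤ a → a ≤ b → b < f (k + 1) → Y a = Y b)) := by
    intro k hk
    have hk1p : f (k+1) ≤ p := fmono hfm (k+1) (t-1) (by omega) (by omega)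
    have hkp : f k < p := lt_of_lt_of_le (hfm k (by omega)) hk1p
    have hYeq : ∀ i, i ∈ Finset.Ico (f k) (f (k+1)) → Y i = α i := by
      intro i hi
      rw [Finset.mem_Ico] at hi
      exact hbelow i (by omega)
    have htre : ∀ i, i ∈ Finset.Ico (f k) (f (k+1)) → tr μ (l-1) i = μ i := by
      intro i hi
      rw [Finset.mem_Ico] at hi
      rw [tr, if_pos (by omega)]
    obtain ⟨⟨hsum, hdomk⟩, hshape⟩ := hblocks k (by omega)
    refine ⟨⟨?_, ?_⟩, ?_⟩
    · rw [Finset.sum_congr rfl hYeq, Finset.sum_congr rfl htre]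
      exact hsum
    · intro m hm1 hm2
      have e1 : ∀ i, i ∈ Finset.Ico (f k) m → tr μ (l-1) i = μ i := by
        intro i hi
        rw [Finset.mem_Ico] at hi
        rw [tr, if_pos (by omega)]
      have e2 : ∀ i, i ∈ Finset.Ico (f k) m → Y i = α i := by
        intro i hi
        rw [Finset.mem_Ico] at hi
        exact hbelow i (by omega)
      rw [Finset.sum_congr rfl e1, Finset.sum_congr rfl e2]
      exact hdomk m hm1 hm2
    · rcases hshape with hs | hs
      · left
        intro a b ha hab hb
        rw [hbelow a (by omega), hbelow b (by omega)]
        exact hs a b ha hab hb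
      · right
        constructor
        · have h1 : Y (f k + 1) ≤ α (f k + 1) := D0.ub _
          have h2 : Y (f k) = α (f k) := hbelow _ hkp
          have h3 := hs.1
          omega
        · intro a b ha hab hb
          rw [hbelow a (by omega), hbelow b (by omega)]
          exact hs.2 a b ha hab hb
  -- construct the decomposition for the peeled pair
  have hGD' : GoodDecomp (l-1) Y (tr μ (l-1)) := by
    by_cases hpe : p = l - 1
    · refine ⟨t - 1, f, hf0, by rw [← hpdef, hpe], fun k hk => hfm k (by omega), ?_⟩
      intro k hk
      exact htransfer k hk
    · have hpl1 : p < l - 1 := by omega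
      refine ⟨t, Function.update f t (l-1), ?_, Function.update_self t (l-1) f, ?_, ?_⟩
      · rw [Function.update_apply, if_neg (by omega), hf0]
      · intro k hk
        rw [Function.update_apply, if_neg (by omega), Function.update_apply]
        by_cases hc : k + 1 = t
        · rw [if_pos hc]
          have h1 : f k ≤ p := fmono hfm k (t-1) (by omega) (by omega)
          omega
        · rw [if_neg hc]
          exact hfm k hk
      · intro k hk
        rw [Function.update_apply, if_neg (by omega), Function.update_apply]
        by_cases hc : k = t - 1
        · -- the last block [p, l-1)
          subst hc
          rw [if_pos (by omega), ← hpdef]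
          have hwidth : p < l - 1 := by omega
          have hYtot : ps Y (l-1) = ps μ (l-1) := dstrip_ps_tot hl1 D0
          refine ⟨⟨?_, ?_⟩, ?_⟩
          · have e3 := ps_add_Ico (x := Y) (le_of_lt hwidth)
            have e4 := ps_add_Ico (x := μ) (le_of_lt hwidth)
            have e5 : ∑ i ∈ Finset.Ico p (l-1), tr μ (l-1) i
                = ∑ i ∈ Finset.Ico p (l-1), μ i := by
              apply Finset.sum_congr rfl
              intro i hi
              rw [Finset.mem_Ico] at hi
              rw [tr, if_pos (by omega)]
            rw [e5]
            omega
          · intro m hm1 hm2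
            have e3 := ps_add_Ico (x := Y) hm1
            have e4 := ps_add_Ico (x := μ) hm1
            have e5 : ∑ i ∈ Finset.Ico p m, tr μ (l-1) i
                = ∑ i ∈ Finset.Ico p m, μ i := by
              apply Finset.sum_congr rfl
              intro i hi
              rw [Finset.mem_Ico] at hi
              rw [tr, if_pos (by omega)]
            have e6 := D0.dom m (by omega)
            rw [e5]
            omega
          · -- shape of the peeled last block
            by_cases hnarrow : l - 1 ≤ p + 2
            · left
              intro a b ha hab hb
              have : a = b := by omega
              rw [this]
            · have hsqueeze : ∀ j, α (j+1) = α j → Y j = α j := by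
                intro j hc2
                have h1 := D0.lb j; have h2 := D0.ub j; omega
              rcases hble.2 with hs | hs
              · left
                intro a b ha hab hb
                have hca : α (a+1) = α a := (hs a (a+1) ha (by omega) (by omega)).symm
                have hcb : α (b+1) = α b := (hs b (b+1) (by omega) (by omega) (by omega)).symm
                rw [hsqueeze a hca, hsqueeze b hcb]
                exact hs a b ha hab (by omega)
              · have hsq2 : ∀ j, p + 1 ≤ j → j ≤ l - 2 → Y j = α j := by
                  intro j h1 h2
                  apply hsqueeze
                  exact (hs.2 j (j+1) h1 (by omega) (by omega)).symm
                by_cases hY1 : Y (p+1) < Y p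
                · right
                  refine ⟨hY1, ?_⟩
                  intro a b ha hab hb
                  rw [hsq2 a ha (by omega), hsq2 b (by omega) (by omega)]
                  exact hs.2 a b ha hab (by omega)
                · left
                  have hYpp : Y p = Y (p+1) := by
                    have := hYanti (Nat.le_add_right p 1)
                    omega
                  have hval : ∀ j, p ≤ j → j + 1 < l - 1 → Y j = Y (p+1) := by
                    intro j h1 h2
                    by_cases hjp : j = p
                    · rw [hjp]; exact hYpp
                    · rw [hsq2 j (by omega) (by omega), hsq2 (p+1) (le_refl _) (by omega)]
                      exact (hs.2 (p+1) j (le_refl _) (by omega) (by omega)).symm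
                  intro a b ha hab hb
                  rw [hval a ha (by omega), hval b (by omega) hb]
        · -- a lower block
          have hk' : k < t - 1 := by omega
          rw [if_neg (by omega)]
          exact htransfer k hk'
  have hK' : kostka Y (tr μ (l-1)) = 1 :=
    ihl (l-1) (by omega) Y (tr μ (l-1)) hYanti (fun i hi => hYz0 i hi)
      (tr_antitone hμ (l-1)) (tr_zero μ (l-1)) hGD'
  obtain ⟨S0, hS0⟩ := kostka_one_iff.1 hK'
  rw [kostka]
  have hset : {T : ℕ → ℕ → ℕ | IsSSYT α T ∧ HasWeight α T μ} = {comp α Y l S0} := by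
    ext T
    simp only [Set.mem_setOf_eq, Set.mem_singleton_iff]
    constructor
    · rintro ⟨hT, hW⟩
      have DT : DStrip l α μ (z α T (l-1)) := dstrip_of_tableau hl1 hα hα0 hμ0 hT hW
      have hzeq : z α T (l-1) = Y := huniqY _ DT
      have hres := res_is_tableau hl1 hα hα0 hT hW hμ0
      rw [hzeq] at hres
      have : res Y T ∈ {S | IsSSYT Y S ∧ HasWeight Y S (tr μ (l-1))} := hres
      rw [hS0, Set.mem_singleton_iff] at this
      have heq := tableau_eq_comp hl1 hα hα0 hμ0 hT hW
      rw [hzeq, this] at heq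
      exact heq
    · rintro rfl
      have hS0mem : S0 ∈ {S | IsSSYT Y S ∧ HasWeight Y S (tr μ (l-1))} := by
        rw [hS0]; rfl
      obtain ⟨ha, hb, _⟩ := dstrip_comp_mem hl1 hα hα0 hμ0 htotl D0 hS0mem.1 hS0mem.2
      exact ⟨ha, hb⟩
  rw [hset, Set.ncard_singleton]

end LemA

section LemB

lemma lemB : ∀ l, ∀ α μ : ℕ → ℕ, Antitone α → (∀ i, l ≤ i → α i = 0) →
    Antitone μ → (∀ i, l ≤ i → μ i = 0) → kostka α μ = 1 →
    ∀ p q, p < q → q ≤ l → ps μ p = ps α p → ps μ q = ps α q →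
    (∀ k, p < k → k < q → ps μ k ≠ ps α k) →
    ((∀ a b, p ≤ a → a ≤ b → b + 1 < q → α a = α b) ∨
     (α (p + 1) < α p ∧ ∀ a b, p + 1 ≤ a → a ≤ b → b < q → α a = α b)) := by
  intro l
  induction l using Nat.strong_induction_on with
  | _ l ihl =>
  intro α μ hα hα0 hμ hμ0 hK p q hpq hql hbp hbq hnb
  by_cases hnarrow : q ≤ p + 2
  · left
    intro a b ha hab hb
    obtain rfl : a = b := by omega
    rfl
  push_neg at hnarrow
  have hl1 : 1 ≤ l := by omega
  obtain ⟨T0, hT0set⟩ := kostka_one_iff.1 hK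
  have hT0mem : T0 ∈ {T' : ℕ → ℕ → ℕ | IsSSYT α T' ∧ HasWeight α T' μ} := by
    rw [hT0set]; rfl
  obtain ⟨hT0, hT0W⟩ := hT0mem
  set Y := z α T0 (l-1) with hYdef
  have D0 : DStrip l α μ Y := dstrip_of_tableau hl1 hα hα0 hμ0 hT0 hT0W
  have htot : ps μ l = ps α l := totals_eq hα hα0 hT0W hT0 hμ0
  have hdom : ∀ k, ps μ k ≤ ps α k := fun k => dominance hα hα0 hT0W hT0 k
  have hKY : kostka Y (tr μ (l-1)) = 1 :=
    kostka_peel hl1 hα hα0 hμ0 hT0 hT0W hT0set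
  have hYanti : Antitone Y := dstrip_antitone D0
  have hYb : ∀ b, b ≤ l - 1 → ps μ b = ps α b → ∀ i, i < b → Y i = α i :=
    fun b hb hbb => dstrip_below D0 hb hbb D0.ub
  by_cases hcq : q < l
  · -- the block ends strictly below the top: pass to the peeled pair
    have hYa : ∀ i, i < q → Y i = α i := hYb q (by omega) hbq
    have hbpY : ps (tr μ (l-1)) p = ps Y p := by
      rw [ps_tr_eq μ (l-1) p (by omega)]
      have hh : ps Y p = ps α p := ps_eq_of_eq p (fun i hi => hYa i (by omega))
      omega
    have hbqY : ps (tr μ (l-1)) q = ps Y q := by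
      rw [ps_tr_eq μ (l-1) q (by omega)]
      have hh : ps Y q = ps α q := ps_eq_of_eq q (fun i hi => hYa i (by omega))
      omega
    have hnbY : ∀ k, p < k → k < q → ps (tr μ (l-1)) k ≠ ps Y k := by
      intro k h1 h2
      rw [ps_tr_eq μ (l-1) k (by omega)]
      have hh : ps Y k = ps α k := ps_eq_of_eq k (fun i hi => hYa i (by omega))
      have := hnb k h1 h2
      omega
    have ihres := ihl (l-1) (by omega) Y (tr μ (l-1)) hYanti D0.z0
      (tr_antitone hμ (l-1)) (tr_zero μ (l-1)) hKY p q hpq (by omega) hbpY hbqY hnbY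
    rcases ihres with hg | hg
    · left
      intro a b ha hab hb
      rw [← hYa a (by omega), ← hYa b (by omega)]
      exact hg a b ha hab hb
    · right
      constructor
      · have := hg.1
        rw [hYa (p+1) (by omega), hYa p (by omega)] at this
        exact this
      · intro a b ha hab hb
        rw [← hYa a (by omega), ← hYa b (by omega)]
        exact hg.2 a b ha hab hb
  · -- q = l : the top block
    have hqleq : q = l := by omega
    rw [hqleq] at hbq hnb hnarrow hpq ⊢
    have hstrict : ∀ k, p < k → k < l → ps μ k < ps α k :=
      fun k h1 h2 => lt_of_le_of_ne (hdom k) (hnb k h1 h2)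
    have hYp : ∀ i, i < p → Y i = α i := hYb p (by omega) hbp
    have hpsYl1 : ps Y (l-1) = ps μ (l-1) := dstrip_ps_tot hl1 D0
    have epsμ : ps μ l = ps μ (l-1) + μ (l-1) := by
      conv_lhs => rw [show l = l-1+1 by omega]
      exact ps_succ μ (l-1)
    have epsα : ps α l = ps α (l-1) + α (l-1) := by
      conv_lhs => rw [show l = l-1+1 by omega]
      exact ps_succ α (l-1)
    have hμs : α (l-1) < μ (l-1) := by
      have := hstrict (l-1) (by omega) (by omega)
      omega
    have hex : ∃ w, Y w < α w := by
      by_contra h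
      push_neg at h
      have : ps Y (l-1) = ps α (l-1) :=
        ps_eq_of_eq (l-1) (fun i _ => le_antisymm (D0.ub i) (h i))
      have := hstrict (l-1) (by omega) (by omega)
      omega
    set istar := Nat.find hex with histdef
    have hfind1 : Y istar < α istar := Nat.find_spec hex
    have hYeqbelow : ∀ i, i < istar → Y i = α i :=
      fun i hi => le_antisymm (D0.ub i) (not_lt.mp (Nat.find_min hex hi))
    have histle : istar ≤ l - 2 := by
      by_contra hgt
      push_neg at hgt
      -- all of Y = α on [0, l-1) then contradiction as before
      have : ps Y (l-1) = ps α (l-1) :=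
        ps_eq_of_eq (l-1) (fun i hi => hYeqbelow i (by omega))
      omega
    have histp : p ≤ istar := by
      by_contra h
      push_neg at h
      have := hYp istar h
      omega
    have hpsYk : ∀ k, k ≤ istar → ps Y k = ps α k :=
      fun k hk => ps_eq_of_eq k (fun i hi => hYeqbelow i (by omega))
    have hl2 : 2 ≤ l := by omega
    -- (N0) bottom-packed below the first removal row
    have hN0 : ∀ u, istar < u → u ≤ l - 2 → Y u = α (u+1) := by
      intro u h1 h2
      by_contra hne
      have hu : α (u+1) < Y u := lt_of_le_of_ne (D0.lb u) (Ne.symm hne)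
      exact move_contra hl2 hα hα0 hμ hμ0 htot hK D0 (w := istar) (u := u)
        (by omega) hfind1 hu (by omega) h2 (fun k hk1 hk2 => by omega)
    -- telescope identity
    have hTEL : ∀ k, istar < k → k ≤ l - 1 → ps Y k + μ (l-1) = ps α k + α k := by
      intro k h1 h2
      have e1 := ps_add_Ico (x := Y) (a := k) (b := l-1) (by omega)
      have e2 := ps_add_Ico (x := α) (a := k) (b := l-1) (by omega)
      have e3 := tele_sum hα k (l-1) (by omega)
      have e4 : ∑ i ∈ Finset.Ico k (l-1), Y i
          + ∑ i ∈ Finset.Ico k (l-1), (α i - α (i+1))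
          = ∑ i ∈ Finset.Ico k (l-1), α i := by
        rw [← Finset.sum_add_distrib]
        apply Finset.sum_congr rfl
        intro i hi
        rw [Finset.mem_Ico] at hi
        have h5 := hN0 i (by omega) (by omega)
        have h6 : α (i+1) ≤ α i := hα (Nat.le_add_right i 1)
        omega
      have e8 : α (l-1) ≤ α k := hα (by omega)
      omega
    have hstar : Y istar + μ (l-1) = α istar + α (istar + 1) := by
      have e1 := hTEL (istar + 1) (by omega) (by omega)
      have e2 : ps Y (istar + 1) = ps Y istar + Y istar := ps_succ Y istar
      have e3 : ps α (istar + 1) = ps α istar + α istar := ps_succ α istar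
      have e4 := hpsYk istar (le_refl istar)
      omega
    have hkeyk : ∀ k, p < k → k ≤ l - 2 → ps μ k < ps Y k := by
      intro k h1 h2
      by_cases hc : k ≤ istar
      · rw [hpsYk k hc]
        exact hstrict k h1 (by omega)
      · have e := hTEL k (by omega) (by omega)
        have e6 : ps μ (k+1) = ps μ k + μ k := ps_succ μ k
        have e7 : ps α (k+1) = ps α k + α k := ps_succ α k
        have hs := hstrict (k+1) (by omega) (by omega)
        have hmm : μ (l-1) ≤ μ k := hμ (by omega)
        omega
    -- (N1) no descent strictly before istar
    have hN1 : ∀ u, p ≤ u → u < istar → α u = α (u+1) := by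
      intro u h1 h2
      by_contra hne
      have hu : α (u+1) < Y u := by
        rw [hYeqbelow u h2]
        exact lt_of_le_of_ne (hα (Nat.le_add_right u 1)) (Ne.symm hne)
      exact move_contra hl2 hα hα0 hμ hμ0 htot hK D0 (w := istar) (u := u)
        (by omega) hfind1 hu (by omega) (by omega)
        (fun k hk1 hk2 => hkeyk k (by omega) (by omega))
    have hconst1 : ∀ u v, p ≤ u → u ≤ v → v ≤ istar → α u = α v :=
      const_of_adj (a := p) (b := istar) (fun u h1 h2 => hN1 u h1 h2)
    have hμp : μ p < α p := by
      have h1 := hstrict (p+1) (by omega) (by omega)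
      have h2 : ps μ (p+1) = ps μ p + μ p := ps_succ μ p
      have h3 : ps α (p+1) = ps α p + α p := ps_succ α p
      omega
    have hμlp : μ (l-1) ≤ μ p := hμ (by omega)
    have hcase2 : α (istar + 1) < Y istar := by
      rcases lt_or_eq_of_le (D0.lb istar) with h | h
      · exact h
      · exfalso
        have e1 := hconst1 p istar (le_refl p) histp (le_refl istar)
        omega
    -- (N3) no descent strictly after istar
    have hN3 : ∀ w, istar < w → w ≤ l - 2 → α w = α (w+1) := by
      intro w h1 h2
      by_contra hne
      have hw : Y w < α w := by
        rw [hN0 w h1 h2]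
        exact lt_of_le_of_ne (hα (Nat.le_add_right w 1)) (Ne.symm hne)
      exact move_contra hl2 hα hα0 hμ hμ0 htot hK D0 (w := w) (u := istar)
        (by omega) hw hcase2 h2 (by omega)
        (fun k hk1 hk2 => hkeyk k (by omega) (by omega))
    have hconst2 : ∀ u v, istar + 1 ≤ u → u ≤ v → v ≤ l - 1 → α u = α v :=
      const_of_adj (a := istar + 1) (b := l - 1)
        (fun u h1 h2 => hN3 u (by omega) (by omega))
    by_cases hc1 : istar = p
    · right
      constructor
      · have h1 := D0.ub istar
        rw [hc1] at hcase2 h1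
        omega
      · intro a b ha hab hb
        rw [← hc1] at ha
        exact hconst2 a b ha hab (by omega)
    · by_cases hc2 : istar + 1 < l - 1
      · exfalso
        have hbpY2 : ps (tr μ (l-1)) p = ps Y p := by
          rw [ps_tr_eq μ (l-1) p (by omega), hpsYk p (by omega), hbp]
        have hbqY2 : ps (tr μ (l-1)) (l-1) = ps Y (l-1) := by
          rw [ps_tr_eq μ (l-1) (l-1) (le_refl _), hpsYl1]
        have hnbY2 : ∀ k, p < k → k < l-1 → ps (tr μ (l-1)) k ≠ ps Y k := by
          intro k h1 h2
          rw [ps_tr_eq μ (l-1) k (by omega)]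
          have := hkeyk k h1 (by omega)
          omega
        have ihres := ihl (l-1) (by omega) Y (tr μ (l-1)) hYanti D0.z0
          (tr_antitone hμ (l-1)) (tr_zero μ (l-1)) hKY p (l-1) (by omega)
          (le_refl (l-1)) hbpY2 hbqY2 hnbY2
        rcases ihres with hg | hg
        · have e1 := hg p istar (le_refl p) histp (by omega)
          have e2 : Y p = α p := hYeqbelow p (by omega)
          have e3 := hconst1 p istar (le_refl p) histp (le_refl istar)
          omega
        · by_cases hc3 : p + 1 < istar
          · have e1 : Y (p+1) = α (p+1) := hYeqbelow _ hc3
            have e2 : Y p = α p := hYeqbelow _ (by omega)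
            have e3 : α p = α (p+1) := hconst1 p (p+1) (le_refl _) (by omega) (by omega)
            have := hg.1
            omega
          · have histar : istar = p + 1 := by omega
            have e1 : Y istar = Y (istar+1) :=
              hg.2 istar (istar+1) (by omega) (by omega) (by omega)
            have e2 : Y (istar+1) = α (istar+2) := hN0 (istar+1) (by omega) (by omega)
            have e3 : α (istar+1) = α (istar+2) :=
              hconst2 (istar+1) (istar+2) (le_refl _) (by omega) (by omega)
            omega
      · -- istar = l - 2
        left
        intro a b ha hab hb
        exact hconst1 a b ha hab (by omega)

end LemB

section Assemble

lemma psize_eq_ps {f : ℕ → ℕ} {L : ℕ} (h : ∀ i, L ≤ i → f i = 0) :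
    psize f = ps f L := by
  rw [psize, ps]
  apply finsum_eq_sum_of_support_subset
  intro i hi
  simp only [Function.mem_support] at hi
  simp only [Finset.coe_range, Set.mem_Iio]
  by_contra hc
  exact hi (h i (by omega))

end Assemble

end BZ

/-- The Berenshteĭn–Zelevinskiĭ theorem. The indices `0 = i_0 < i_1 < ⋯ < i_t = l`
are encoded as `f 0 = 0`, `f t = l`, `f` strictly increasing on `[0, t]`;
the blocks of rows are 0-indexed: block `k` consists of rows `f k, …, f (k+1) - 1`. -/
theorem stmt8 (n l : ℕ) (lam mu : ℕ → ℕ)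
    (hlp : IsPartition lam) (hln : psize lam = n)
    (hmp : IsPartition mu) (hmn : psize mu = n)
    (hml : PartLength mu l) :
    kostka lam mu = 1 ↔
      ∃ (t : ℕ) (f : ℕ → ℕ), f 0 = 0 ∧ f t = l ∧ (∀ k, k < t → f k < f (k + 1)) ∧
        ∀ k, k < t →
          ((∑ i ∈ Finset.Ico (f k) (f (k + 1)), lam i
              = ∑ i ∈ Finset.Ico (f k) (f (k + 1)), mu i) ∧
           (∀ m, f k ≤ m → m ≤ f (k + 1) →
              ∑ i ∈ Finset.Ico (f k) m, mu i ≤ ∑ i ∈ Finset.Ico (f k) m, lam i)) ∧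
          ((∀ a b, f k ≤ a → a ≤ b → b + 1 < f (k + 1) → lam a = lam b) ∨
           (lam (f k + 1) < lam (f k) ∧
             ∀ a b, f k + 1 ≤ a → a ≤ b → b < f (k + 1) → lam a = lam b)) := by
  classical
  obtain ⟨hlanti, N, hN⟩ := hlp
  obtain ⟨hmanti, -⟩ := hmp
  obtain ⟨hmpos, hm0⟩ := hml
  have hlL : ∀ i, max N l ≤ i → lam i = 0 := fun i hi => hN i (by omega)
  have hmL : ∀ i, max N l ≤ i → mu i = 0 := fun i hi => hm0 i (by omega)
  have hpsml : BZ.ps mu l = n := by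
    rw [← hmn]
    exact (BZ.psize_eq_ps hm0).symm
  have hpslL : BZ.ps lam (max N l) = n := by
    rw [← hln]
    exact (BZ.psize_eq_ps hlL).symm
  constructor
  · -- necessity
    intro hK
    obtain ⟨T0, hT0set⟩ := BZ.kostka_one_iff.1 hK
    have hT0mem : T0 ∈ {T' : ℕ → ℕ → ℕ | IsSSYT lam T' ∧ HasWeight lam T' mu} := by
      rw [hT0set]; rfl
    have hdom : ∀ k, BZ.ps mu k ≤ BZ.ps lam k :=
      fun k => BZ.dominance hlanti hlL hT0mem.2 hT0mem.1 k
    have hlamtail : ∀ i, l ≤ i → lam i = 0 := by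
      intro i hi
      have h1 : BZ.ps mu l ≤ BZ.ps lam l := hdom l
      have h2 : BZ.ps lam l ≤ BZ.ps lam (max N l) := BZ.ps_mono lam (le_max_right N l)
      by_cases hiL : i < max N l
      · have hz := BZ.ps_add_Ico (x := lam) (a := l) (b := max N l) (le_max_right N l)
        have hzero : ∑ j ∈ Finset.Ico l (max N l), lam j = 0 := by omega
        exact Finset.sum_eq_zero_iff.mp hzero i (Finset.mem_Ico.2 ⟨hi, hiL⟩)
      · exact hlL i (by omega)
    have htotl : BZ.ps mu l = BZ.ps lam l := by
      have h2 : BZ.ps lam (max N l) = BZ.ps lam l :=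
        BZ.ps_stable hlamtail (le_max_right N l)
      omega
    set B := (Finset.range (l+1)).filter (fun b => BZ.ps mu b = BZ.ps lam b) with hB
    have h0B : (0 : ℕ) ∈ B := by
      rw [hB, Finset.mem_filter, Finset.mem_range]
      exact ⟨by omega, rfl⟩
    have hlB : l ∈ B := by
      rw [hB, Finset.mem_filter, Finset.mem_range]
      exact ⟨by omega, htotl⟩
    have hBne : B.Nonempty := ⟨0, h0B⟩
    have hBsub : ∀ b ∈ B, b ≤ l ∧ BZ.ps mu b = BZ.ps lam b := by
      intro b hb
      rw [hB, Finset.mem_filter, Finset.mem_range] at hb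
      exact ⟨by omega, hb.2⟩
    have hcard : 1 ≤ B.card := Finset.card_pos.2 hBne
    have hc0 : 0 < B.card := hcard
    have hct : B.card - 1 < B.card := by omega
    set emb := B.orderEmbOfFin rfl with hemb
    have hmem : ∀ j : Fin B.card, emb j ∈ B := fun j => Finset.orderEmbOfFin_mem B rfl j
    have hsurj : ∀ m ∈ B, ∃ j : Fin B.card, emb j = m := by
      intro m hm
      have : m ∈ Set.range emb := by
        rw [hemb, Finset.range_orderEmbOfFin]
        exact hm
      exact this
    have hmono : ∀ (i j : Fin B.card), i ≤ j → emb i ≤ emb j := fun i j hij =>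
      emb.monotone hij
    have hstrict : ∀ (i j : Fin B.card), i < j → emb i < emb j := fun i j hij =>
      emb.strictMono hij
    refine ⟨B.card - 1, fun k => if h : k < B.card then emb ⟨k, h⟩ else l, ?_, ?_, ?_, ?_⟩
    · beta_reduce
      rw [dif_pos hc0]
      obtain ⟨j, hj⟩ := hsurj 0 h0B
      have h1 : emb ⟨0, hc0⟩ ≤ emb j := hmono _ _ (Fin.le_def.mpr (Nat.zero_le _))
      omega
    · beta_reduce
      rw [dif_pos hct]
      obtain ⟨j, hj⟩ := hsurj l hlB
      have h1 : emb j ≤ emb ⟨B.card - 1, hct⟩ := hmono _ _ (Fin.le_def.mpr (by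
        have := j.isLt
        simp only [Fin.val_mk]
        omega))
      have h2 := (hBsub _ (hmem ⟨B.card - 1, hct⟩)).1
      omega
    · intro k hk
      beta_reduce
      have hk1 : k < B.card := by omega
      have hk2 : k + 1 < B.card := by omega
      rw [dif_pos hk1, dif_pos hk2]
      exact hstrict _ _ (Fin.mk_lt_mk.2 (by omega))
    · intro k hk
      beta_reduce
      have hk1 : k < B.card := by omega
      have hk2 : k + 1 < B.card := by omega
      rw [dif_pos hk1, dif_pos hk2]
      have hamem := hBsub _ (hmem ⟨k, hk1⟩)
      have hbmem := hBsub _ (hmem ⟨k+1, hk2⟩)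
      have hab : emb ⟨k, hk1⟩ < emb ⟨k+1, hk2⟩ := hstrict _ _ (Fin.mk_lt_mk.2 (by omega))
      have hcons : ∀ m, emb ⟨k, hk1⟩ < m → m < emb ⟨k+1, hk2⟩ →
          BZ.ps mu m ≠ BZ.ps lam m := by
        intro m h1 h2 heq
        have hmB : m ∈ B := by
          have hmlt : m ≤ l := by
            have := (hBsub _ (hmem ⟨k+1, hk2⟩)).1
            omega
          rw [hB, Finset.mem_filter, Finset.mem_range]
          exact ⟨by omega, heq⟩
        obtain ⟨j, hj⟩ := hsurj m hmB
        rw [← hj] at h1 h2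
        have hj1 : k < (j : ℕ) := emb.strictMono.lt_iff_lt.1 h1
        have hj2 : (j : ℕ) < k + 1 := emb.strictMono.lt_iff_lt.1 h2
        omega
      refine ⟨⟨?_, ?_⟩, ?_⟩
      · have e1 := BZ.ps_add_Ico (x := lam) (le_of_lt hab)
        have e2 := BZ.ps_add_Ico (x := mu) (le_of_lt hab)
        have e3 := hamem.2
        have e4 := hbmem.2
        omega
      · intro m hm1 hm2
        have e1 := BZ.ps_add_Ico (x := lam) hm1
        have e2 := BZ.ps_add_Ico (x := mu) hm1
        have e3 := hamem.2
        have e4 := hdom m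
        omega
      · exact BZ.lemB l lam mu hlanti hlamtail hmanti hm0 hK _ _ hab hbmem.1
          hamem.2 hbmem.2 hcons
  · -- sufficiency
    rintro ⟨t, f, hf0, hft, hfm, hblocks⟩
    have hGD : BZ.GoodDecomp l lam mu := ⟨t, f, hf0, hft, hfm, hblocks⟩
    have htotl : BZ.ps mu l = BZ.ps lam l := by
      have := BZ.decomp_bp hf0 hfm (fun k hk => (hblocks k hk).1.1) t (le_refl t)
      rw [hft] at this
      exact this
    have hlamtail : ∀ i, l ≤ i → lam i = 0 := by
      intro i hi
      have h2 : BZ.ps lam l ≤ BZ.ps lam (max N l) := BZ.ps_mono lam (le_max_right N l)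
      by_cases hiL : i < max N l
      · have hz := BZ.ps_add_Ico (x := lam) (a := l) (b := max N l) (le_max_right N l)
        have hzero : ∑ j ∈ Finset.Ico l (max N l), lam j = 0 := by omega
        exact Finset.sum_eq_zero_iff.mp hzero i (Finset.mem_Ico.2 ⟨hi, hiL⟩)
      · exact hlL i (by omega)
    exact BZ.lemA l lam mu hlanti hlamtail hmanti hm0 hGD
end
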